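/- arXiv:1710.07367 — 12 statements merged into one kernel-verified Lean document; each statement's English description precedes it below -/
import Mathlib

section
/- Let (α_k), (η_k), (ε_k) be sequences of nonnegative real numbers satisfying α_{k+1} ≤ (1 − η_k)·α_k + η_k·ε_k for all k ≥ 0. If η_k → 0 as k → ∞, ∑_{k=0}^∞ η_k = ∞, and ε_k → 0 as k → ∞, then α_k → 0 as k → ∞. -/
open Filter Topology

/-- **Xu's convergence lemma.** If nonnegative real sequences satisfy
`α_{k+1} ≤ (1 − η_k) α_k + η_k ε_k`, with `η_k → 0`, `∑ η_k = ∞`, and `ε_k → 0`,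
then `α_k → 0`. -/
theorem stmt_0 (α η ε : ℕ → ℝ)
    (hα : ∀ k, 0 ≤ α k) (hη : ∀ k, 0 ≤ η k) (hε : ∀ k, 0 ≤ ε k)
    (hrec : ∀ k, α (k + 1) ≤ (1 - η k) * α k + η k * ε k)
    (hη0 : Tendsto η atTop (𝓝 0))
    (hηsum : Tendsto (fun n => ∑ k ∈ Finset.range n, η k) atTop atTop)
    (hε0 : Tendsto ε atTop (𝓝 0)) :
    Tendsto α atTop (𝓝 0) := by
  rw [Metric.tendsto_atTop]
  intro δ hδ
  have h1 : ∀ᶠ k in atTop, ε k ≤ δ / 4 :=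
    hε0.eventually (eventually_le_nhds (by linarith))
  have h2 : ∀ᶠ k in atTop, η k ≤ 1 :=
    hη0.eventually (eventually_le_nhds one_pos)
  obtain ⟨N, hN⟩ := eventually_atTop.mp (h1.and h2)
  set P : ℕ → ℝ := fun m => ∏ j ∈ Finset.range m, (1 - η (N + j)) with hPdef
  have hfac : ∀ j, 0 ≤ 1 - η (N + j) := fun j => by
    have := (hN (N + j) (Nat.le_add_right _ _)).2; linarith
  have hP0 : ∀ m, 0 ≤ P m := fun m =>
    Finset.prod_nonneg fun j _ => hfac j
  have key : ∀ m, α (N + m) ≤ δ / 4 + P m * α N := by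
    intro m
    induction m with
    | zero => simp [hPdef]; linarith [hα N]
    | succ m ih =>
      have hrec' := hrec (N + m)
      have hε' : ε (N + m) ≤ δ / 4 := (hN (N + m) (Nat.le_add_right _ _)).1
      have hη' : 0 ≤ 1 - η (N + m) := hfac m
      have hP : P (m + 1) = P m * (1 - η (N + m)) := by
        simp [hPdef, Finset.prod_range_succ]
      have : α (N + (m + 1)) ≤ (1 - η (N + m)) * α (N + m) + η (N + m) * ε (N + m) := by
        have : N + (m + 1) = (N + m) + 1 := by ring
        rw [this]; exact hrec'
      calc α (N + (m + 1)) ≤ (1 - η (N + m)) * α (N + m) + η (N + m) * ε (N + m) := this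
        _ ≤ (1 - η (N + m)) * (δ / 4 + P m * α N) + η (N + m) * (δ / 4) := by
            gcongr
            exact hη (N + m)
        _ = δ / 4 + P (m + 1) * α N := by rw [hP]; ring
  have hPle : ∀ m, P m ≤ Real.exp (-(∑ j ∈ Finset.range m, η (N + j))) := by
    intro m
    calc P m ≤ ∏ j ∈ Finset.range m, Real.exp (-(η (N + j))) := by
          apply Finset.prod_le_prod (fun j _ => hfac j)
          intro j _
          have := Real.add_one_le_exp (-(η (N + j)))
          linarith
      _ = Real.exp (∑ j ∈ Finset.range m, -(η (N + j))) := (Real.exp_sum _ _).symm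
      _ = Real.exp (-(∑ j ∈ Finset.range m, η (N + j))) := by rw [Finset.sum_neg_distrib]
  have hsum : Tendsto (fun m => ∑ j ∈ Finset.range m, η (N + j)) atTop atTop := by
    have heq : ∀ m, ∑ j ∈ Finset.range m, η (N + j)
        = (∑ k ∈ Finset.range (N + m), η k) - ∑ k ∈ Finset.range N, η k := by
      intro m
      rw [Finset.sum_range_add]
      ring
    have hT : Tendsto (fun m => ∑ k ∈ Finset.range (N + m), η k) atTop atTop := by
      have := hηsum.comp (tendsto_add_atTop_nat N)
      exact this.congr fun m => by simp [Nat.add_comm]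
    simp only [heq, sub_eq_add_neg]
    exact tendsto_atTop_add_const_right _ _ hT
  have hPtend : Tendsto P atTop (𝓝 0) := by
    have hexp : Tendsto (fun m => Real.exp (-(∑ j ∈ Finset.range m, η (N + j)))) atTop (𝓝 0) :=
      Real.tendsto_exp_atBot.comp (tendsto_neg_atBot_iff.mpr hsum)
    exact squeeze_zero hP0 hPle hexp
  have hmul : Tendsto (fun m => P m * α N) atTop (𝓝 0) := by
    simpa using hPtend.mul_const (α N)
  have hev : ∀ᶠ m in atTop, P m * α N < δ / 2 := by
    have := hmul.eventually (eventually_lt_nhds (show (0:ℝ) < δ / 2 by linarith))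
    simpa using this
  obtain ⟨M, hM⟩ := eventually_atTop.mp hev
  refine ⟨N + M, fun n hn => ?_⟩
  have hNn : N ≤ n := le_trans (Nat.le_add_right _ _) hn
  obtain ⟨m, rfl⟩ := Nat.exists_eq_add_of_le hNn
  have hm : M ≤ m := by omega
  have := key m
  have := hM m hm
  have hαn := hα (N + m)
  rw [Real.dist_eq, sub_zero, abs_of_nonneg hαn]
  linarith
end

section
/- Let (α_k) be a sequence of nonnegative real numbers satisfying α_{k+1} ≤ α_k − β_k·α_k^{1+η} for all k ≥ 0, where β_k ≥ 0 for all k and η > 0 is a constant. Then for every k ≥ 1, α_k ≤ α_0·(1 + η·α_0^η·∑_{i=0}^{k−1} β_i)^{−1/η}. In particular, if β_k ≡ β for all k, then α_k ≤ α_0/(1 + η·α_0^η·β·k)^{1/η} for all k ≥ 0; and if moreover η = 1, then α_k ≤ α_0/(1 + α_0·β·k) for all k ≥ 0. -/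
open Finset Real

lemma key_ineq {x η : ℝ} (hx0 : 0 ≤ x) (hx1 : x < 1) (hη : 0 < η) :
    (1 + η * x) * (1 - x) ^ η ≤ 1 := by
  have h1 : (0:ℝ) < 1 - x := by linarith
  have h2 : (0:ℝ) < 1 + η * x := by nlinarith
  have l1 : Real.log (1 + η * x) ≤ η * x := by
    have := Real.log_le_sub_one_of_pos h2; linarith
  have l2 : Real.log (1 - x) ≤ -x := by
    have := Real.log_le_sub_one_of_pos h1; linarith
  have heq : (1 + η * x) * (1 - x) ^ η
      = Real.exp (Real.log (1 + η * x) + Real.log (1 - x) * η) := by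
    rw [Real.exp_add, Real.exp_log h2, Real.rpow_def_of_pos h1]
  rw [heq]
  calc Real.exp (Real.log (1 + η * x) + Real.log (1 - x) * η)
      ≤ Real.exp (η * x + (-x) * η) := by
        apply Real.exp_le_exp.2
        have : Real.log (1 - x) * η ≤ (-x) * η :=
          mul_le_mul_of_nonneg_right l2 hη.le
        linarith
    _ = 1 := by rw [show η * x + (-x) * η = 0 by ring, Real.exp_zero]

/-- **Polyak's recursion lemma.** If `α_{k+1} ≤ α_k − β_k α_k^{1+η}` with `α_k, β_k ≥ 0`
and `η > 0`, then `α_k ≤ α_0 (1 + η α_0^η ∑_{i<k} β_i)^{-1/η}` for `k ≥ 1`; in particular,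
for constant `β_k ≡ β` one has `α_k ≤ α_0 / (1 + η α_0^η β k)^{1/η}` for all `k`, and if
moreover `η = 1`, then `α_k ≤ α_0 / (1 + α_0 β k)`. -/
theorem stmt_1 (α β : ℕ → ℝ) (η : ℝ)
    (hα : ∀ k, 0 ≤ α k) (hβ : ∀ k, 0 ≤ β k) (hη : 0 < η)
    (hrec : ∀ k, α (k + 1) ≤ α k - β k * (α k) ^ (1 + η)) :
    (∀ k ≥ 1, α k ≤ α 0 * (1 + η * (α 0) ^ η * ∑ i ∈ Finset.range k, β i) ^ (-(1 / η)))
    ∧ (∀ b : ℝ, (∀ k, β k = b) →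
        (∀ k : ℕ, α k ≤ α 0 / (1 + η * (α 0) ^ η * b * k) ^ (1 / η))
        ∧ (η = 1 → ∀ k : ℕ, α k ≤ α 0 / (1 + α 0 * b * k))) := by
  have hS : ∀ k, 0 ≤ ∑ i ∈ Finset.range k, β i :=
    fun k => Finset.sum_nonneg fun i _ => hβ i
  have hDpos : ∀ k, 0 < 1 + η * (α 0) ^ η * ∑ i ∈ Finset.range k, β i := by
    intro k
    have : 0 ≤ η * (α 0) ^ η * ∑ i ∈ Finset.range k, β i :=
      mul_nonneg (mul_nonneg hη.le (Real.rpow_nonneg (hα 0) η)) (hS k)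
    linarith
  have main : ∀ k, α k ≤ α 0 * (1 + η * (α 0) ^ η * ∑ i ∈ Finset.range k, β i) ^ (-(1 / η)) := by
    by_cases h0 : α 0 = 0
    · have hz : ∀ k, α k = 0 := by
        intro k; induction k with
        | zero => exact h0
        | succ n ih =>
          have hr := hrec n
          rw [ih, Real.zero_rpow (by positivity)] at hr
          simp only [mul_zero, sub_zero] at hr
          exact le_antisymm hr (hα _)
      intro k
      rw [hz k, h0, zero_mul]
    · have h0p : 0 < α 0 := lt_of_le_of_ne (hα 0) (Ne.symm h0)
      have inv : ∀ k, α k = 0 ∨ (0 < α k ∧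
          (α 0) ^ (-η) + η * ∑ i ∈ Finset.range k, β i ≤ (α k) ^ (-η)) := by
        intro k; induction k with
        | zero => exact Or.inr ⟨h0p, by simp⟩
        | succ n ih =>
          rcases (hα (n+1)).eq_or_lt with h | h
          · exact Or.inl h.symm
          right
          refine ⟨h, ?_⟩
          have hr := hrec n
          have han : 0 < α n := by
            rcases (hα n).eq_or_lt with hn | hn
            · exfalso
              rw [← hn, Real.zero_rpow (by positivity)] at hr
              simp only [mul_zero, sub_zero] at hr
              linarith
            · exact hn
          rcases ih with hn0 | ⟨_, hIH⟩
          · exact absurd hn0 han.ne'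
          set x := β n * (α n) ^ η with hxdef
          have hx0 : 0 ≤ x := mul_nonneg (hβ n) (Real.rpow_nonneg (hα n) η)
          have hsplit : (α n) ^ (1 + η) = α n * (α n) ^ η := by
            rw [Real.rpow_add han, Real.rpow_one]
          have hr' : α (n+1) ≤ α n * (1 - x) := by
            rw [hsplit] at hr; rw [hxdef]; nlinarith [hr]
          have hx1 : x < 1 := by nlinarith
          have h1x : (0:ℝ) < 1 - x := by linarith
          have hA : (α n * (1 - x)) ^ (-η) ≤ (α (n+1)) ^ (-η) :=
            Real.rpow_le_rpow_of_nonpos h hr' (by linarith)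
          have hmul : (α n * (1 - x)) ^ (-η) = (α n) ^ (-η) * (1 - x) ^ (-η) :=
            Real.mul_rpow (hα n) h1x.le
          have hB : 1 + η * x ≤ (1 - x) ^ (-η) := by
            have hk := key_ineq hx0 hx1 hη
            have hp : 0 < (1 - x) ^ η := Real.rpow_pos_of_pos h1x η
            rw [Real.rpow_neg h1x.le, ← one_div]
            exact (le_div_iff₀ hp).mpr hk
          have hcancel : (α n) ^ η * (α n) ^ (-η) = 1 := by
            rw [← Real.rpow_add han]; simp
          have hanp : 0 < (α n) ^ (-η) := Real.rpow_pos_of_pos han _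
          have hC : (α n) ^ (-η) + η * β n ≤ (α (n+1)) ^ (-η) := by
            have h1 : (α n) ^ (-η) * (1 + η * x) ≤ (α n) ^ (-η) * (1 - x) ^ (-η) :=
              mul_le_mul_of_nonneg_left hB hanp.le
            have h2 : (α n) ^ (-η) * (1 + η * x) = (α n) ^ (-η) + η * β n := by
              rw [hxdef]; linear_combination η * β n * hcancel
            rw [hmul] at hA; linarith
          rw [Finset.sum_range_succ]
          linarith
      intro k
      set S := ∑ i ∈ Finset.range k, β i with hSdef
      set D := 1 + η * (α 0) ^ η * S with hDdef
      have hD : 0 < D := hDpos k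
      rcases inv k with hk0 | ⟨hkp, hIk⟩
      · rw [hk0]
        exact mul_nonneg (hα 0) (Real.rpow_nonneg hD.le _)
      · have hcancel0 : (α 0) ^ η * (α 0) ^ (-η) = 1 := by
          rw [← Real.rpow_add h0p]; simp
        have ha0p : 0 < (α 0) ^ (-η) := Real.rpow_pos_of_pos h0p _
        have heq : (α 0) ^ (-η) * D = (α 0) ^ (-η) + η * S := by
          rw [hDdef]; linear_combination η * S * hcancel0
        have hlow : 0 < (α 0) ^ (-η) * D := mul_pos ha0p hD
        have hle : (α 0) ^ (-η) * D ≤ (α k) ^ (-η) := by rw [heq]; exact hIk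
        have hstep : ((α k) ^ (-η)) ^ (-(1/η)) ≤ ((α 0) ^ (-η) * D) ^ (-(1/η)) :=
          Real.rpow_le_rpow_of_nonpos hlow hle (neg_nonpos.mpr (by positivity))
        have hexp : -η * -(1/η) = 1 := by field_simp
        have hL : ((α k) ^ (-η)) ^ (-(1/η)) = α k := by
          rw [← Real.rpow_mul (hα k), hexp, Real.rpow_one]
        have hR : ((α 0) ^ (-η) * D) ^ (-(1/η)) = α 0 * D ^ (-(1/η)) := by
          rw [Real.mul_rpow ha0p.le hD.le, ← Real.rpow_mul (hα 0), hexp, Real.rpow_one]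
        rw [hL, hR] at hstep
        exact hstep
  refine ⟨fun k _ => main k, fun b hb => ?_⟩
  have hb0 : 0 ≤ b := hb 0 ▸ hβ 0
  have hsum : ∀ k : ℕ, ∑ i ∈ Finset.range k, β i = b * k := by
    intro k
    simp [hb, mul_comm]
  have P : ∀ k : ℕ, α k ≤ α 0 / (1 + η * (α 0) ^ η * b * k) ^ (1 / η) := by
    intro k
    have h := main k
    rw [hsum k] at h
    have hD : 0 < 1 + η * (α 0) ^ η * b * k := by
      have : (0:ℝ) ≤ η * (α 0) ^ η * b * k :=
        mul_nonneg (mul_nonneg (mul_nonneg hη.le (Real.rpow_nonneg (hα 0) η)) hb0) (Nat.cast_nonneg k)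
      linarith
    have harr : 1 + η * (α 0) ^ η * (b * k) = 1 + η * (α 0) ^ η * b * k := by ring
    rw [harr, Real.rpow_neg hD.le, ← div_eq_mul_inv] at h
    exact h
  refine ⟨P, fun hη1 k => ?_⟩
  have h := P k
  rw [hη1] at h
  simpa using h
end

section
/- Suppose the Fréchet derivative f' is uniformly continuous on C and the stepsizes (γ_k) are chosen by line minimization. Then the sequence (x_k) generated by the Frank–Wolfe algorithm satisfies: (i) f(x_{k+1}) ≤ f(x_k) for all k ≥ 0, and (ii) f(x_k) → f* as k → ∞. -/
/-!
Line minimization makes `f (x k)` nonincreasing, so it converges to some `L ≥ f*`. If `L > f*`,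
the Frank–Wolfe gap gives the slope bound `f' (x k) (xbar k - x k) ≤ f* - f (x k) ≤ -(L - f*)`.
Uniform continuity of `f'` on the bounded convex set `C` provides a single step length `t > 0`
along which the derivative changes this slope by at most `(L - f*) / 2`, uniformly in `k`;
comparing the line-minimizing step with the step `t` then shows that `f` drops by at least
`t (L - f*) / 2` at every iteration, which is incompatible with convergence.
-/

open Filter Topology Set Metric

section

variable {X : Type*} [NormedAddCommGroup X] [NormedSpace ℝ X]

theorem ConvexOn.fderiv_apply_sub_le {s : Set X} {f : X → ℝ} {φ : X →L[ℝ] ℝ} {a b : X}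
    (hf : ConvexOn ℝ s f) (ha : a ∈ s) (hb : b ∈ s) (hφ : HasFDerivAt f φ a) :
    φ (b - a) ≤ f b - f a := by
  let ℓ : ℝ →ᵃ[ℝ] X := AffineMap.lineMap a b
  have hline : ConvexOn ℝ (ℓ ⁻¹' s) (f ∘ ℓ) := hf.comp_affineMap ℓ
  have hderiv : HasDerivAt (f ∘ ℓ) (φ (b - a)) 0 :=
    (by simpa [ℓ] using hφ : HasFDerivAt f φ (ℓ 0)).comp_hasDerivAt 0
      AffineMap.hasDerivAt_lineMap
  simpa [slope_def_field, ℓ] using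
    hline.le_slope_of_hasDerivAt (by simpa [ℓ] using ha) (by simpa [ℓ] using hb) one_pos hderiv

theorem ConvexOn.apply_add_smul_le {s : Set X} {f : X → ℝ} {φ : X →L[ℝ] ℝ} {u d : X} {t : ℝ}
    (hf : ConvexOn ℝ s f) (hu : u ∈ s) (hy : u + t • d ∈ s) (hφ : HasFDerivAt f φ (u + t • d)) :
    f (u + t • d) ≤ f u + t * φ d := by
  have h := hf.fderiv_apply_sub_le hy hu hφ
  rw [show u - (u + t • d) = -(t • d) by abel, map_neg, map_smul, smul_eq_mul] at h
  linarith

theorem ConvexOn.apply_add_smul_sub_le {s : Set X} {f : X → ℝ} {φ ψ : X →L[ℝ] ℝ} {u v : X}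
    {t ε : ℝ} (hf : ConvexOn ℝ s f) (hu : u ∈ s) (hy : u + t • (v - u) ∈ s)
    (hψ : HasFDerivAt f ψ (u + t • (v - u))) (ht : 0 ≤ t) (hslope : φ (v - u) ≤ -ε)
    (hchange : (ψ - φ) (v - u) ≤ ε / 2) :
    f (u + t • (v - u)) ≤ f u - t * (ε / 2) := by
  have hψslope : ψ (v - u) ≤ -(ε / 2) := by
    have : ψ (v - u) = φ (v - u) + (ψ - φ) (v - u) := by simp
    linarith
  calc f (u + t • (v - u)) ≤ f u + t * ψ (v - u) := hf.apply_add_smul_le hu hy hψ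
    _ ≤ f u - t * (ε / 2) := by nlinarith

theorem frankWolfe_gap_le {C : Set X} {f : X → ℝ} {φ : X →L[ℝ] ℝ} {x xbar xstar : X}
    (hf : ConvexOn ℝ C f) (hx : x ∈ C) (hxstar : xstar ∈ C) (hφ : HasFDerivAt f φ x)
    (hmin : φ xbar ≤ φ xstar) :
    φ (xbar - x) ≤ f xstar - f x := by
  have := hf.fderiv_apply_sub_le hx hxstar hφ
  rw [map_sub] at this ⊢
  linarith

theorem UniformContinuousOn.exists_step_apply_sub_le {C : Set X} {g : X → X →L[ℝ] ℝ}
    (hg : UniformContinuousOn g C) (hCbd : Bornology.IsBounded C) (hCcv : Convex ℝ C)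
    {η : ℝ} (hη : 0 < η) :
    ∃ t ∈ Ioc (0 : ℝ) 1, ∀ u ∈ C, ∀ v ∈ C, (g (u + t • (v - u)) - g u) (v - u) ≤ η := by
  set R := diam C + 1
  have hR : 0 < R := by positivity
  obtain ⟨δ, hδ, hgδ⟩ := Metric.uniformContinuousOn_iff.1 hg (η / R) (by positivity)
  set t := min 1 (δ / R)
  have ht : t ∈ Ioc (0 : ℝ) 1 := ⟨by positivity, min_le_left _ _⟩
  refine ⟨t, ht, fun u hu v hv => ?_⟩
  have hvu : ‖v - u‖ ≤ diam C := by
    rw [← dist_eq_norm]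
    exact dist_le_diam_of_mem hCbd hv hu
  have hnear : dist (u + t • (v - u)) u < δ :=
    calc dist (u + t • (v - u)) u = t * ‖v - u‖ := by
          simp [dist_eq_norm, norm_smul, abs_of_pos ht.1]
      _ < t * R := by gcongr; linarith
      _ ≤ δ / R * R := by gcongr; exact min_le_right _ _
      _ = δ := div_mul_cancel₀ _ hR.ne'
  have hclose := hgδ _ (hCcv.add_smul_sub_mem hu hv ⟨ht.1.le, ht.2⟩) u hu hnear
  rw [dist_eq_norm] at hclose
  calc (g (u + t • (v - u)) - g u) (v - u) ≤ ‖g (u + t • (v - u)) - g u‖ * ‖v - u‖ :=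
        (le_abs_self _).trans ((g (u + t • (v - u)) - g u).le_opNorm _)
    _ ≤ η / R * R := by gcongr; linarith
    _ = η := div_mul_cancel₀ _ hR.ne'

end

theorem stmt_2_general
    {X : Type*} [NormedAddCommGroup X] [NormedSpace ℝ X]
    (C : Set X)
    (hCbd : Bornology.IsBounded C) (hCcv : Convex ℝ C)
    (f : X → ℝ) (f' : X → X →L[ℝ] ℝ)
    (hfconv : ConvexOn ℝ Set.univ f)
    (hfderiv : ∀ x : X, HasFDerivAt f (f' x) x)
    (hfUC : UniformContinuousOn f' C)
    (xstar : X) (hxstarC : xstar ∈ C) (hxstarmin : ∀ y ∈ C, f xstar ≤ f y)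
    (x xbar : ℕ → X) (γ : ℕ → ℝ)
    (hx0 : x 0 ∈ C)
    (hxbarC : ∀ k, xbar k ∈ C)
    (hxbarmin : ∀ k, ∀ y ∈ C, f' (x k) (xbar k) ≤ f' (x k) y)
    (hγ : ∀ k, γ k ∈ Set.Icc (0 : ℝ) 1)
    (hupdate : ∀ k, x (k + 1) = x k + γ k • (xbar k - x k))
    (hlinemin : ∀ k, ∀ γ' ∈ Set.Icc (0 : ℝ) 1,
      f (x k + γ k • (xbar k - x k)) ≤ f (x k + γ' • (xbar k - x k))) :
    (∀ k, f (x (k + 1)) ≤ f (x k)) ∧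
      Tendsto (fun k => f (x k)) atTop (𝓝 (f xstar)) := by
  have hxC : ∀ k, x k ∈ C := by
    intro k
    induction k with
    | zero => exact hx0
    | succ k ih => rw [hupdate k]; exact hCcv.add_smul_sub_mem ih (hxbarC k) (hγ k)
  have hdec : ∀ k, f (x (k + 1)) ≤ f (x k) := fun k => by
    simpa [hupdate k] using hlinemin k 0 (left_mem_Icc.2 zero_le_one)
  refine ⟨hdec, ?_⟩
  have hfstar : ∀ k, f xstar ≤ f (x k) := fun k => hxstarmin _ (hxC k)
  have hanti : Antitone fun k => f (x k) := antitone_nat_of_succ_le hdec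
  have hL := tendsto_atTop_ciInf hanti ⟨f xstar, forall_mem_range.2 hfstar⟩
  set L := ⨅ k, f (x k)
  obtain hLeq | hlt := (ge_of_tendsto' hL hfstar).eq_or_lt
  · rwa [← hLeq] at hL
  obtain ⟨t, ht, hstep⟩ := hfUC.exists_step_apply_sub_le hCbd hCcv (half_pos (sub_pos.2 hlt))
  have hdescent : ∀ k, t * ((L - f xstar) / 2) ≤ f (x k) - f (x (k + 1)) := by
    intro k
    have hgap : f' (x k) (xbar k - x k) ≤ -(L - f xstar) := by
      have := frankWolfe_gap_le (hfconv.subset (subset_univ C) hCcv) (hxC k) hxstarC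
        (hfderiv (x k)) (hxbarmin k xstar hxstarC)
      linarith [hanti.le_of_tendsto hL k]
    have := hfconv.apply_add_smul_sub_le (mem_univ _) (mem_univ _) (hfderiv _) ht.1.le hgap
      (hstep _ (hxC k) _ (hxbarC k))
    linarith [hupdate k ▸ hlinemin k t ⟨ht.1.le, ht.2⟩]
  have hdiff : Tendsto (fun k => f (x k) - f (x (k + 1))) atTop (𝓝 0) := by
    simpa using hL.sub (hL.comp (tendsto_add_atTop_nat 1))
  exact absurd (ge_of_tendsto' hdiff hdescent) (mul_pos ht.1 (half_pos (sub_pos.2 hlt))).not_ge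

/-- **Convergence of the Frank–Wolfe algorithm with line minimization search**
(Theorem 3.1). If `f'` is uniformly continuous on `C` and the stepsizes are chosen by
line minimization, then the Frank–Wolfe iterates satisfy `f(x_{k+1}) ≤ f(x_k)` and
`f(x_k) → f* = inf_C f`. -/
theorem stmt_2
    {X : Type*} [NormedAddCommGroup X] [NormedSpace ℝ X] [CompleteSpace X]
    (C : Set X) (hCne : C.Nonempty) (hCcl : IsClosed C)
    (hCbd : Bornology.IsBounded C) (hCcv : Convex ℝ C)
    (f : X → ℝ) (f' : X → X →L[ℝ] ℝ)
    (hfconv : ConvexOn ℝ Set.univ f)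
    (hfderiv : ∀ x : X, HasFDerivAt f (f' x) x)
    (hfUC : UniformContinuousOn f' C)
    (xstar : X) (hxstarC : xstar ∈ C) (hxstarmin : ∀ y ∈ C, f xstar ≤ f y)
    (x xbar : ℕ → X) (γ : ℕ → ℝ)
    (hx0 : x 0 ∈ C)
    (hxbarC : ∀ k, xbar k ∈ C)
    (hxbarmin : ∀ k, ∀ y ∈ C, f' (x k) (xbar k) ≤ f' (x k) y)
    (hγ : ∀ k, γ k ∈ Set.Icc (0 : ℝ) 1)
    (hupdate : ∀ k, x (k + 1) = x k + γ k • (xbar k - x k))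
    (hlinemin : ∀ k, ∀ γ' ∈ Set.Icc (0 : ℝ) 1,
      f (x k + γ k • (xbar k - x k)) ≤ f (x k + γ' • (xbar k - x k))) :
    (∀ k, f (x (k + 1)) ≤ f (x k)) ∧
      Tendsto (fun k => f (x k)) atTop (𝓝 (f xstar)) :=
  stmt_2_general C hCbd hCcv f f' hfconv hfderiv hfUC xstar hxstarC hxstarmin x xbar γ hx0 hxbarC
    hxbarmin hγ hupdate hlinemin
end

section
/- Suppose the Fréchet derivative f' is uniformly continuous on C and the stepsizes (γ_k) satisfy the open loop rule. Then the sequence (x_k) generated by the Frank–Wolfe algorithm satisfies f(x_k) → f* = inf_{x ∈ C} f(x) as k → ∞. -/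
open Filter Topology Set Uniformity

/-!
Convexity gives the descent estimate
`f x_{k+1} - f* ≤ (1 - γ_k) (f x_k - f*) + γ_k ‖f'(x_{k+1}) - f'(x_k)‖ ‖x̄_k - x_k‖`:
compare `f` at `x_{k+1}` and `x_k` through the gradient at `x_{k+1}`, then replace that
gradient by the one at `x_k`, for which `x̄_k` is a linear minimiser over `C`. The steps
`x_{k+1} - x_k` have length at most `γ_k diam C → 0`, so uniform continuity of `f'` makes the
error term vanish, and a recursion `h_{k+1} ≤ (1 - γ_k) h_k + γ_k δ_k` with `δ_k → 0` and
`∑ γ_k = ∞` forces `h_k → 0`: the excess of `h_k` over any positive level is eventually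
multiplied by `∏ (1 - γ_k) ≤ exp (-∑ γ_k)`.
-/

theorem ConvexOn.apply_sub_le_of_hasFDerivAt {E : Type*} [NormedAddCommGroup E]
    [NormedSpace ℝ E] {s : Set E} {f : E → ℝ} {f' : E →L[ℝ] ℝ} {a b : E} (hf : ConvexOn ℝ s f)
    (ha : a ∈ s) (hb : b ∈ s) (hfa : HasFDerivAt f f' a) :
    f' (b - a) ≤ f b - f a := by
  have hline : ConvexOn ℝ (Icc (0 : ℝ) 1) (f ∘ AffineMap.lineMap a b) :=
    (hf.comp_affineMap _).subset (fun _ ht => hf.1.lineMap_mem ha hb ht) (convex_Icc _ _)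
  have hderiv : HasDerivAt (f ∘ AffineMap.lineMap (k := ℝ) a b) (f' (b - a)) 0 :=
    hfa.comp_hasDerivAt_of_eq 0 AffineMap.hasDerivAt_lineMap (by simp)
  simpa [slope_def_field] using
    hline.le_slope_of_hasDerivWithinAt (by simp) (by simp) one_pos hderiv.hasDerivWithinAt

theorem UniformContinuousOn.tendsto_dist_comp {α β ι : Type*} [PseudoMetricSpace α]
    [PseudoMetricSpace β] {f : α → β} {s : Set α} (hf : UniformContinuousOn f s)
    {l : Filter ι} {u v : ι → α} (hu : ∀ᶠ i in l, u i ∈ s) (hv : ∀ᶠ i in l, v i ∈ s)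
    (huv : Tendsto (fun i => dist (u i) (v i)) l (𝓝 0)) :
    Tendsto (fun i => dist (f (u i)) (f (v i))) l (𝓝 0) := by
  have hpair : Tendsto (fun i => (u i, v i)) l (𝓤 α ⊓ 𝓟 (s ×ˢ s)) :=
    tendsto_inf.2 ⟨tendsto_uniformity_iff_dist_tendsto_zero.2 huv,
      tendsto_principal.2 (hu.and hv)⟩
  exact tendsto_uniformity_iff_dist_tendsto_zero.1 (Tendsto.comp hf hpair)

theorem tendsto_zero_of_le_one_sub_mul {u γ : ℕ → ℝ} (hu : ∀ k, 0 ≤ u k)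
    (hrec : ∀ᶠ k in atTop, u (k + 1) ≤ (1 - γ k) * u k)
    (hγsum : Tendsto (fun n => ∑ k ∈ Finset.range n, γ k) atTop atTop) :
    Tendsto u atTop (𝓝 0) := by
  obtain ⟨N, hN⟩ := eventually_atTop.1 hrec
  set S := fun n => ∑ k ∈ Finset.range n, γ k
  have hbound : ∀ k ≥ N, u k ≤ u N * Real.exp (-(S k - S N)) := by
    intro k hk
    induction k, hk using Nat.le_induction with
    | base => simp
    | succ k hk ih =>
      calc u (k + 1) ≤ (1 - γ k) * u k := hN k hk
        _ ≤ Real.exp (-γ k) * (u N * Real.exp (-(S k - S N))) := by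
          gcongr
          · exact hu k
          · linarith [Real.add_one_le_exp (-γ k)]
        _ = u N * Real.exp (-(S (k + 1) - S N)) := by
          rw [mul_left_comm, ← Real.exp_add]
          simp only [S, Finset.sum_range_succ]
          ring_nf
  have hexp : Tendsto (fun k => u N * Real.exp (-(S k - S N))) atTop (𝓝 0) := by
    simpa [sub_eq_add_neg, add_comm] using (Real.tendsto_exp_neg_atTop_nhds_zero.comp
      (tendsto_atTop_add_const_right _ (-S N) hγsum)).const_mul (u N)
  exact squeeze_zero' (Eventually.of_forall hu) (eventually_atTop.2 ⟨N, hbound⟩) hexp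

theorem tendsto_zero_of_le_one_sub_mul_add_mul {h δ γ : ℕ → ℝ} (hh : ∀ k, 0 ≤ h k)
    (hγ : ∀ k, γ k ∈ Icc (0 : ℝ) 1) (hδ : Tendsto δ atTop (𝓝 0))
    (hγsum : Tendsto (fun n => ∑ k ∈ Finset.range n, γ k) atTop atTop)
    (hrec : ∀ k, h (k + 1) ≤ (1 - γ k) * h k + γ k * δ k) :
    Tendsto h atTop (𝓝 0) := by
  refine tendsto_order.2 ⟨fun a ha => .of_forall fun k => ha.trans_le (hh k), fun a ha => ?_⟩
  have hexcess : Tendsto (fun k => max (h k - a / 2) 0) atTop (𝓝 0) := by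
    refine tendsto_zero_of_le_one_sub_mul (fun k => le_max_right _ _) ?_ hγsum
    filter_upwards [hδ.eventually (eventually_le_nhds (half_pos ha))] with k hk
    obtain ⟨hγ0, hγ1⟩ := hγ k
    refine max_le ?_ (mul_nonneg (sub_nonneg.2 hγ1) (le_max_right _ _))
    calc h (k + 1) - a / 2 ≤ (1 - γ k) * (h k - a / 2) + γ k * (δ k - a / 2) := by
          linarith [hrec k]
      _ ≤ (1 - γ k) * (h k - a / 2) :=
          add_le_of_nonpos_right (mul_nonpos_of_nonneg_of_nonpos hγ0 (by linarith))
      _ ≤ (1 - γ k) * max (h k - a / 2) 0 :=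
          mul_le_mul_of_nonneg_left (le_max_left _ _) (sub_nonneg.2 hγ1)
  filter_upwards [hexcess.eventually (eventually_lt_nhds (half_pos ha))] with k hk
  linarith [le_max_left (h k - a / 2) 0]

theorem frankWolfe_gap_step_le {E : Type*} [NormedAddCommGroup E] [NormedSpace ℝ E]
    {f : E → ℝ} {f' : E → E →L[ℝ] ℝ} (hf : ConvexOn ℝ univ f)
    (hf' : ∀ x, HasFDerivAt f (f' x) x) {x xbar xstar : E} {γ : ℝ} (hγ : 0 ≤ γ)
    (hmin : f' x xbar ≤ f' x xstar) :
    f (x + γ • (xbar - x)) - f xstar ≤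
      (1 - γ) * (f x - f xstar) +
        γ * (‖f' (x + γ • (xbar - x)) - f' x‖ * ‖xbar - x‖) := by
  set y := x + γ • (xbar - x)
  have hdescent : f y - f x ≤ γ * f' y (xbar - x) := by
    have hback := hf.apply_sub_le_of_hasFDerivAt (mem_univ y) (mem_univ x) (hf' y)
    rw [show x - y = -(γ • (xbar - x)) by simp [y], map_neg, map_smul, smul_eq_mul] at hback
    linarith
  have hlinear : f' x (xbar - x) ≤ f xstar - f x := by
    have hgrad := hf.apply_sub_le_of_hasFDerivAt (mem_univ x) (mem_univ xstar) (hf' x)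
    rw [map_sub] at hgrad ⊢
    linarith
  have hvariation : (f' y - f' x) (xbar - x) ≤ ‖f' y - f' x‖ * ‖xbar - x‖ :=
    (Real.le_norm_self _).trans ((f' y - f' x).le_opNorm _)
  have hsplit : f' y (xbar - x) = f' x (xbar - x) + (f' y - f' x) (xbar - x) := by simp
  have := mul_le_mul_of_nonneg_left (hsplit ▸ add_le_add hlinear hvariation) hγ
  linarith

theorem stmt_3_general
    {X : Type*} [NormedAddCommGroup X] [NormedSpace ℝ X]
    (C : Set X)
    (hCbd : Bornology.IsBounded C) (hCcv : Convex ℝ C)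
    (f : X → ℝ) (f' : X → X →L[ℝ] ℝ)
    (hfconv : ConvexOn ℝ Set.univ f)
    (hfderiv : ∀ x : X, HasFDerivAt f (f' x) x)
    (hfUC : UniformContinuousOn f' C)
    (xstar : X) (hxstarC : xstar ∈ C) (hxstarmin : ∀ y ∈ C, f xstar ≤ f y)
    (x xbar : ℕ → X) (γ : ℕ → ℝ)
    (hx0 : x 0 ∈ C)
    (hxbarC : ∀ k, xbar k ∈ C)
    (hxbarmin : ∀ k, ∀ y ∈ C, f' (x k) (xbar k) ≤ f' (x k) y)
    (hupdate : ∀ k, x (k + 1) = x k + γ k • (xbar k - x k))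
    (hγ : ∀ k, γ k ∈ Set.Ioc (0 : ℝ) 1)
    (hγ0 : Tendsto γ atTop (𝓝 0))
    (hγsum : Tendsto (fun n => ∑ k ∈ Finset.range n, γ k) atTop atTop) :
    Tendsto (fun k => f (x k)) atTop (𝓝 (f xstar)) := by
  have hxC : ∀ k, x k ∈ C := by
    intro k
    induction k with
    | zero => exact hx0
    | succ k ih =>
      exact hupdate k ▸ hCcv.add_smul_sub_mem ih (hxbarC k) (Ioc_subset_Icc_self (hγ k))
  have hwidth : ∀ k, ‖xbar k - x k‖ ≤ Metric.diam C := fun k =>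
    dist_eq_norm (xbar k) (x k) ▸ Metric.dist_le_diam_of_mem hCbd (hxbarC k) (hxC k)
  have hstep : Tendsto (fun k => dist (x (k + 1)) (x k)) atTop (𝓝 0) := by
    refine squeeze_zero (fun _ => dist_nonneg) (fun k => ?_)
      (by simpa using hγ0.mul_const (Metric.diam C))
    rw [hupdate k, dist_eq_norm, add_sub_cancel_left, norm_smul,
      Real.norm_of_nonneg (hγ k).1.le]
    exact mul_le_mul_of_nonneg_left (hwidth k) (hγ k).1.le
  have hderivStep : Tendsto (fun k => ‖f' (x (k + 1)) - f' (x k)‖) atTop (𝓝 0) := by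
    simpa [dist_eq_norm] using
      hfUC.tendsto_dist_comp (.of_forall fun k => hxC (k + 1)) (.of_forall hxC) hstep
  have hδ : Tendsto (fun k => ‖f' (x (k + 1)) - f' (x k)‖ * ‖xbar k - x k‖) atTop (𝓝 0) :=
    squeeze_zero (fun _ => by positivity)
      (fun k => mul_le_mul_of_nonneg_left (hwidth k) (norm_nonneg _))
      (by simpa using hderivStep.mul_const (Metric.diam C))
  have hgap := tendsto_zero_of_le_one_sub_mul_add_mul
    (fun k => sub_nonneg.2 (hxstarmin _ (hxC k))) (fun k => Ioc_subset_Icc_self (hγ k)) hδ hγsum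
    fun k => by
      rw [hupdate k]
      exact frankWolfe_gap_step_le hfconv hfderiv (hγ k).1.le (hxbarmin k xstar hxstarC)
  simpa using hgap.add_const (f xstar)

/-- **Convergence of the Frank–Wolfe algorithm with open loop stepsizes**
(Theorem 3.2). If `f'` is uniformly continuous on `C` and the stepsizes satisfy the
open loop rule `γ_k ∈ (0,1]`, `γ_k → 0`, `∑ γ_k = ∞`, then `f(x_k) → f* = inf_C f`. -/
theorem stmt_3
    {X : Type*} [NormedAddCommGroup X] [NormedSpace ℝ X] [CompleteSpace X]
    (C : Set X) (hCne : C.Nonempty) (hCcl : IsClosed C)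
    (hCbd : Bornology.IsBounded C) (hCcv : Convex ℝ C)
    (f : X → ℝ) (f' : X → X →L[ℝ] ℝ)
    (hfconv : ConvexOn ℝ Set.univ f)
    (hfderiv : ∀ x : X, HasFDerivAt f (f' x) x)
    (hfUC : UniformContinuousOn f' C)
    (xstar : X) (hxstarC : xstar ∈ C) (hxstarmin : ∀ y ∈ C, f xstar ≤ f y)
    (x xbar : ℕ → X) (γ : ℕ → ℝ)
    (hx0 : x 0 ∈ C)
    (hxbarC : ∀ k, xbar k ∈ C)
    (hxbarmin : ∀ k, ∀ y ∈ C, f' (x k) (xbar k) ≤ f' (x k) y)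
    (hupdate : ∀ k, x (k + 1) = x k + γ k • (xbar k - x k))
    (hγ : ∀ k, γ k ∈ Set.Ioc (0 : ℝ) 1)
    (hγ0 : Tendsto γ atTop (𝓝 0))
    (hγsum : Tendsto (fun n => ∑ k ∈ Finset.range n, γ k) atTop atTop) :
    Tendsto (fun k => f (x k)) atTop (𝓝 (f xstar)) :=
  stmt_3_general C hCbd hCcv f f' hfconv hfderiv hfUC xstar hxstarC hxstarmin x xbar γ hx0 hxbarC
    hxbarmin hupdate hγ hγ0 hγsum
end

section
/- Suppose the Fréchet derivative f' is uniformly continuous on C, C is weakly compact, f is uniformly convex with modulus δ, and the stepsizes (γ_k) are chosen either by line minimization or by the open loop rule. Then the minimization problem min_{x∈C} f(x) has a unique solution x*, and the sequence (x_k) generated by the Frank–Wolfe algorithm converges to x* in norm. -/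
open Filter Topology Set

/-!
Uniform convexity at the midpoint of `z` and a minimiser `x*` gives `δ ‖z - x*‖ ≤ 2 (f z - f x*)`
on `C`, hence uniqueness. Moving `z` towards `x*` until it is at distance exactly `ε`, convexity
of `f` on the segment upgrades this to `δ ε ≤ 2 (f z - f x*)` whenever `ε ≤ ‖z - x*‖`, so
convergence of the values `f x_k → f x*` forces norm convergence.

For the values, the gradient inequality and uniform continuity of `f'` on the bounded set `C`
give, for each `c > 0`, some `η > 0` with `f (x_k + t (x̄_k - x_k)) ≤ (1 - t) f x_k + t (f x* + c)`
for `t < η`. Both stepsize rules thus yield `a_{k+1} ≤ (1 - g_k) a_k + g_k c` eventually, with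
`∑ g_k = ∞` (a small constant `g_k` for line minimisation), and
`∏ (1 - g_k) ≤ exp (-∑ g_k) → 0` gives `limsup a_k ≤ c`.
-/

theorem eventually_le_add_of_le_one_sub_mul_add {a g : ℕ → ℝ} {c ε : ℝ}
    (hg : ∀ k, g k ∈ Icc (0 : ℝ) 1)
    (hsum : Tendsto (fun n ↦ ∑ k ∈ Finset.range n, g k) atTop atTop)
    (hrec : ∀ᶠ k in atTop, a (k + 1) ≤ (1 - g k) * a k + g k * c) (hε : 0 < ε) :
    ∀ᶠ k in atTop, a k ≤ c + ε := by
  obtain ⟨K, hK⟩ := eventually_atTop.1 hrec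
  set M := max (a K - c) 0
  have hbound : ∀ k ≥ K, a k - c ≤ Real.exp (-∑ j ∈ Finset.Ico K k, g j) * M := by
    intro k hk
    induction k, hk using Nat.le_induction with
    | base => simp [M]
    | succ k hk ih =>
      have hexp : 1 - g k ≤ Real.exp (-g k) := by linarith [Real.add_one_le_exp (-g k)]
      calc a (k + 1) - c ≤ (1 - g k) * (a k - c) := by linarith [hK k hk]
        _ ≤ (1 - g k) * (Real.exp (-∑ j ∈ Finset.Ico K k, g j) * M) :=
          mul_le_mul_of_nonneg_left ih (by linarith [(hg k).2])
        _ ≤ Real.exp (-g k) * (Real.exp (-∑ j ∈ Finset.Ico K k, g j) * M) := by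
          gcongr
        _ = Real.exp (-∑ j ∈ Finset.Ico K (k + 1), g j) * M := by
          rw [Finset.sum_Ico_succ_top hk, neg_add, Real.exp_add]
          ring
  have hpartial : Tendsto (fun k ↦ ∑ j ∈ Finset.Ico K k, g j) atTop atTop := by
    refine (tendsto_atTop_add_const_right _ (-∑ j ∈ Finset.range K, g j) hsum).congr' ?_
    filter_upwards [eventually_ge_atTop K] with k hk
    rw [Finset.sum_Ico_eq_sub _ hk, sub_eq_add_neg]
  have hlim : Tendsto (fun k ↦ Real.exp (-∑ j ∈ Finset.Ico K k, g j) * M) atTop (𝓝 0) := by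
    simpa using (Real.tendsto_exp_neg_atTop_nhds_zero.comp hpartial).mul_const M
  filter_upwards [eventually_ge_atTop K, hlim.eventually (gt_mem_nhds hε)] with k hk hk'
  linarith [hbound k hk]

section

variable {E : Type*} [NormedAddCommGroup E] [NormedSpace ℝ E] {s : Set E} {f : E → ℝ}

theorem ConvexOn.le_sub_of_hasFDerivAt {f' : E →L[ℝ] ℝ} {x y : E} (hf : ConvexOn ℝ s f)
    (hx : x ∈ s) (hy : y ∈ s) (hf' : HasFDerivAt f f' x) : f' (y - x) ≤ f y - f x := by
  set ℓ : ℝ →ᵃ[ℝ] E := AffineMap.lineMap x y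
  have hg : ConvexOn ℝ (ℓ ⁻¹' s) (f ∘ ℓ) := hf.comp_affineMap ℓ
  have hderiv : HasDerivAt (f ∘ ℓ) (f' (y - x)) 0 :=
    hf'.comp_hasDerivAt_of_eq (0 : ℝ) AffineMap.hasDerivAt_lineMap (by simp [ℓ])
  simpa [slope_def_field, ℓ] using
    hg.le_slope_of_hasDerivAt (by simpa [ℓ] using hx) (by simpa [ℓ] using hy) zero_lt_one hderiv

theorem ConvexOn.exists_pos_add_smul_sub_le {f' : E → E →L[ℝ] ℝ}
    (hf : ConvexOn ℝ s f) (hs : Bornology.IsBounded s) (hf' : ∀ x ∈ s, HasFDerivAt f (f' x) x)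
    (hf'uc : UniformContinuousOn f' s) {c : ℝ} (hc : 0 < c) :
    ∃ η > 0, ∀ u ∈ s, ∀ v ∈ s, ∀ t ∈ Icc (0 : ℝ) 1, t < η →
      f (u + t • (v - u)) ≤ f u + t * f' u (v - u) + t * c := by
  obtain ⟨R, hR, hsR⟩ := hs.exists_pos_norm_le
  obtain ⟨ρ, hρ, hρf'⟩ := Metric.uniformContinuousOn_iff.1 hf'uc (c / (2 * R)) (by positivity)
  refine ⟨ρ / (2 * R), by positivity, fun u hu v hv t ht htη => ?_⟩
  have hvu : ‖v - u‖ ≤ 2 * R := (norm_sub_le v u).trans (by linarith [hsR v hv, hsR u hu])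
  set w := u + t • (v - u)
  have hw : w ∈ s := hf.1.add_smul_sub_mem hu hv ht
  have hwu : dist w u < ρ := by
    rw [dist_eq_norm, add_sub_cancel_left, norm_smul, Real.norm_of_nonneg ht.1]
    calc t * ‖v - u‖ ≤ t * (2 * R) := by gcongr; exact ht.1
      _ < ρ := by rwa [lt_div_iff₀ (by positivity)] at htη
  have hgrad : f' w (u - w) ≤ f u - f w := hf.le_sub_of_hasFDerivAt hw hu (hf' w hw)
  have hdiff : (f' w - f' u) (v - u) ≤ c := calc
    (f' w - f' u) (v - u) ≤ ‖f' w - f' u‖ * ‖v - u‖ :=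
      (le_abs_self _).trans ((f' w - f' u).le_opNorm _)
    _ ≤ c / (2 * R) * (2 * R) := by
        gcongr
        exact (dist_eq_norm (f' w) (f' u) ▸ hρf' w hw u hu hwu).le
    _ = c := by field_simp
  have huw : u - w = -(t • (v - u)) := by simp [w]
  rw [huw, map_neg, map_smul, smul_eq_mul] at hgrad
  rw [sub_apply] at hdiff
  nlinarith [mul_le_mul_of_nonneg_left hdiff ht.1]

theorem ConvexOn.exists_pos_frankWolfe_step_le {f' : E → E →L[ℝ] ℝ}
    (hf : ConvexOn ℝ s f) (hs : Bornology.IsBounded s) (hf' : ∀ x ∈ s, HasFDerivAt f (f' x) x)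
    (hf'uc : UniformContinuousOn f' s) {c : ℝ} (hc : 0 < c) :
    ∃ η > 0, ∀ u ∈ s, ∀ v ∈ s, ∀ z ∈ s, f' u v ≤ f' u z → ∀ t ∈ Icc (0 : ℝ) 1, t < η →
      f (u + t • (v - u)) ≤ (1 - t) * f u + t * (f z + c) := by
  obtain ⟨η, hη, hdescent⟩ := hf.exists_pos_add_smul_sub_le hs hf' hf'uc hc
  refine ⟨η, hη, fun u hu v hv z hz hvz t ht htη => ?_⟩
  have hgap : f' u (v - u) ≤ f z - f u := calc
    f' u (v - u) ≤ f' u (z - u) := by simpa only [map_sub] using sub_le_sub_right hvz _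
    _ ≤ f z - f u := hf.le_sub_of_hasFDerivAt hu hz (hf' u hu)
  nlinarith [hdescent u hu v hv t ht htη, mul_le_mul_of_nonneg_left hgap ht.1]

variable {φ : ℝ → ℝ} {a : E}

theorem uniformConvexOn_of_forall_mem_Ioo (hs : Convex ℝ s)
    (h : ∀ x ∈ s, ∀ y ∈ s, ∀ lam : ℝ, 0 < lam → lam < 1 →
      f (lam • x + (1 - lam) • y) ≤ lam * f x + (1 - lam) * f y - lam * (1 - lam) * φ ‖x - y‖) :
    UniformConvexOn s φ f := by
  refine ⟨hs, fun x hx y hy μ ν hμ hν hμν => ?_⟩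
  obtain rfl : ν = 1 - μ := by linarith
  rcases hμ.eq_or_lt with rfl | hμ
  · simp
  rcases hν.eq_or_lt with hν | hν
  · obtain rfl : μ = 1 := by linarith
    simp
  simpa using h x hx y hy μ hμ (by linarith)

theorem UniformConvexOn.modulus_le_of_isMinOn (hf : UniformConvexOn s φ f) (ha : a ∈ s)
    (hmin : IsMinOn f s a) {z : E} (hz : z ∈ s) : φ ‖z - a‖ ≤ 2 * (f z - f a) := by
  have hmid := hf.2 hz ha (show (0 : ℝ) ≤ 1 / 2 by norm_num) (show (0 : ℝ) ≤ 1 / 2 by norm_num)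
    (by norm_num)
  have hle := isMinOn_iff.1 hmin _ (hf.1 hz ha (by norm_num) (by norm_num)
    (by norm_num : (1 / 2 : ℝ) + 1 / 2 = 1))
  simp only [smul_eq_mul] at hmid
  linarith

theorem UniformConvexOn.eq_of_isMinOn (hf : UniformConvexOn s φ f) (hφ : ∀ t > 0, 0 < φ t)
    (ha : a ∈ s) (hmin : IsMinOn f s a) {b : E} (hb : b ∈ s) (hminb : IsMinOn f s b) : b = a := by
  by_contra hba
  have hpos := hφ _ (norm_pos_iff.2 (sub_ne_zero.2 hba))
  linarith [hf.modulus_le_of_isMinOn ha hmin hb, isMinOn_iff.1 hminb a ha]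

theorem UniformConvexOn.norm_sub_lt_of_lt (hf : UniformConvexOn s φ f) (hφ : ∀ t > 0, 0 < φ t)
    (ha : a ∈ s) (hmin : IsMinOn f s a) {ε : ℝ} (hε : 0 < ε) {y : E} (hy : y ∈ s)
    (hfy : f y < f a + φ ε / 2) : ‖y - a‖ < ε := by
  by_contra! hεy
  have hr : 0 < ‖y - a‖ := hε.trans_le hεy
  set σ := ε / ‖y - a‖
  have hσ0 : 0 < σ := div_pos hε hr
  have hσ1 : σ ≤ 1 := (div_le_one hr).2 hεy
  have hz : σ • y + (1 - σ) • a ∈ s := hf.1 hy ha hσ0.le (by linarith) (add_sub_cancel σ 1)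
  have hzdist : ‖σ • y + (1 - σ) • a - a‖ = ε := by
    rw [show σ • y + (1 - σ) • a - a = σ • (y - a) by module, norm_smul,
      Real.norm_of_nonneg hσ0.le, div_mul_cancel₀ _ hr.ne']
  have hmod := hf.modulus_le_of_isMinOn ha hmin hz
  rw [hzdist] at hmod
  have hfz := hf.2 hy ha hσ0.le (show 0 ≤ 1 - σ by linarith) (add_sub_cancel σ 1)
  simp only [smul_eq_mul] at hfz
  have hdrop : 0 ≤ σ * (1 - σ) * φ ‖y - a‖ :=
    mul_nonneg (mul_nonneg hσ0.le (by linarith)) (hφ _ hr).le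
  have hshrink : σ * (f y - f a) ≤ f y - f a :=
    mul_le_of_le_one_left (sub_nonneg.2 (isMinOn_iff.1 hmin y hy)) hσ1
  linarith

theorem UniformConvexOn.tendsto_nhds_of_eventually_le {ι : Type*} {l : Filter ι} {x : ι → E}
    (hf : UniformConvexOn s φ f) (hφ : ∀ t > 0, 0 < φ t) (ha : a ∈ s) (hmin : IsMinOn f s a)
    (hx : ∀ i, x i ∈ s) (h : ∀ ε > 0, ∀ᶠ i in l, f (x i) ≤ f a + ε) : Tendsto x l (𝓝 a) := by
  refine Metric.tendsto_nhds.2 fun ε hε ↦ ?_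
  have hφε := hφ ε hε
  filter_upwards [h (φ ε / 4) (by positivity)] with i hi
  rw [dist_eq_norm]
  exact hf.norm_sub_lt_of_lt hφ ha hmin hε (hx i) (by linarith)

variable {f' : E → E →L[ℝ] ℝ} {x xbar : ℕ → E} {γ : ℕ → ℝ} {z : E} {ε : ℝ}

theorem ConvexOn.frankWolfe_eventually_le_of_lineMin (hf : ConvexOn ℝ s f)
    (hs : Bornology.IsBounded s) (hf' : ∀ x ∈ s, HasFDerivAt f (f' x) x)
    (hf'uc : UniformContinuousOn f' s) (hx : ∀ k, x k ∈ s) (hxbar : ∀ k, xbar k ∈ s)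
    (hxbarmin : ∀ k, ∀ y ∈ s, f' (x k) (xbar k) ≤ f' (x k) y)
    (hupdate : ∀ k, x (k + 1) = x k + γ k • (xbar k - x k))
    (hlm : ∀ k, ∀ γ' ∈ Icc (0 : ℝ) 1,
      f (x k + γ k • (xbar k - x k)) ≤ f (x k + γ' • (xbar k - x k)))
    (hz : z ∈ s) (hε : 0 < ε) : ∀ᶠ k in atTop, f (x k) ≤ f z + ε := by
  obtain ⟨η, hη, hstep⟩ := hf.exists_pos_frankWolfe_step_le hs hf' hf'uc (half_pos hε)
  set t := min 1 (η / 2)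
  have ht0 : 0 < t := lt_min one_pos (half_pos hη)
  have ht : t ∈ Icc (0 : ℝ) 1 := ⟨ht0.le, min_le_left _ _⟩
  have htη : t < η := (min_le_right _ _).trans_lt (half_lt_self hη)
  have hsum : Tendsto (fun n ↦ ∑ _k ∈ Finset.range n, t) atTop atTop := by
    simpa using tendsto_natCast_atTop_atTop.atTop_mul_const ht0
  have hrec : ∀ k, f (x (k + 1)) ≤ (1 - t) * f (x k) + t * (f z + ε / 2) := fun k ↦ by
    rw [hupdate k]
    exact (hlm k t ht).trans
      (hstep _ (hx k) _ (hxbar k) z hz (hxbarmin k z hz) t ht htη)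
  filter_upwards [eventually_le_add_of_le_one_sub_mul_add (a := fun k ↦ f (x k)) (fun _ ↦ ht) hsum
    (Eventually.of_forall hrec) (half_pos hε)] with k hk
  linarith

theorem ConvexOn.frankWolfe_eventually_le_of_openLoop (hf : ConvexOn ℝ s f)
    (hs : Bornology.IsBounded s) (hf' : ∀ x ∈ s, HasFDerivAt f (f' x) x)
    (hf'uc : UniformContinuousOn f' s) (hx : ∀ k, x k ∈ s) (hxbar : ∀ k, xbar k ∈ s)
    (hxbarmin : ∀ k, ∀ y ∈ s, f' (x k) (xbar k) ≤ f' (x k) y)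
    (hupdate : ∀ k, x (k + 1) = x k + γ k • (xbar k - x k))
    (hγ : ∀ k, γ k ∈ Icc (0 : ℝ) 1) (hγ0 : Tendsto γ atTop (𝓝 0))
    (hsum : Tendsto (fun n ↦ ∑ k ∈ Finset.range n, γ k) atTop atTop)
    (hz : z ∈ s) (hε : 0 < ε) : ∀ᶠ k in atTop, f (x k) ≤ f z + ε := by
  obtain ⟨η, hη, hstep⟩ := hf.exists_pos_frankWolfe_step_le hs hf' hf'uc (half_pos hε)
  have hrec : ∀ᶠ k in atTop, f (x (k + 1)) ≤ (1 - γ k) * f (x k) + γ k * (f z + ε / 2) := by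
    filter_upwards [hγ0.eventually (gt_mem_nhds hη)] with k hk
    rw [hupdate k]
    exact hstep _ (hx k) _ (hxbar k) z hz (hxbarmin k z hz) (γ k) (hγ k) hk
  filter_upwards [eventually_le_add_of_le_one_sub_mul_add (a := fun k ↦ f (x k)) hγ hsum hrec
    (half_pos hε)] with k hk
  linarith

end

theorem stmt_6_general
    {X : Type*} [NormedAddCommGroup X] [NormedSpace ℝ X]
    (C : Set X)
    (hCbd : Bornology.IsBounded C) (hCcv : Convex ℝ C)
    (f : X → ℝ) (f' : X → X →L[ℝ] ℝ)
    (hfconv : ConvexOn ℝ Set.univ f)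
    (hfderiv : ∀ x : X, HasFDerivAt f (f' x) x)
    (hfUC : UniformContinuousOn f' C)
    (δ : ℝ → ℝ)
    (hδpos : ∀ t > (0 : ℝ), 0 < δ t)
    (hfUnifConv : ∀ x y : X, ∀ lam : ℝ, 0 < lam → lam < 1 →
      f (lam • x + (1 - lam) • y) ≤
        lam * f x + (1 - lam) * f y - lam * (1 - lam) * δ ‖x - y‖)
    (xstar : X) (hxstarC : xstar ∈ C) (hxstarmin : ∀ y ∈ C, f xstar ≤ f y)
    (x xbar : ℕ → X) (γ : ℕ → ℝ)
    (hx0 : x 0 ∈ C)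
    (hxbarC : ∀ k, xbar k ∈ C)
    (hxbarmin : ∀ k, ∀ y ∈ C, f' (x k) (xbar k) ≤ f' (x k) y)
    (hupdate : ∀ k, x (k + 1) = x k + γ k • (xbar k - x k))
    (hstep :
      ((∀ k, γ k ∈ Set.Icc (0 : ℝ) 1) ∧
        ∀ k, ∀ γ' ∈ Set.Icc (0 : ℝ) 1,
          f (x k + γ k • (xbar k - x k)) ≤ f (x k + γ' • (xbar k - x k)))
      ∨ ((∀ k, γ k ∈ Set.Ioc (0 : ℝ) 1) ∧ Tendsto γ atTop (𝓝 0) ∧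
          Tendsto (fun n => ∑ k ∈ Finset.range n, γ k) atTop atTop)) :
    (∀ z ∈ C, (∀ y ∈ C, f z ≤ f y) → z = xstar) ∧
      Tendsto x atTop (𝓝 xstar) := by
  have hfC : ConvexOn ℝ C f := hfconv.subset (subset_univ C) hCcv
  have hfδ : UniformConvexOn C δ f :=
    uniformConvexOn_of_forall_mem_Ioo hCcv fun x _ y _ ↦ hfUnifConv x y
  have hmin : IsMinOn f C xstar := isMinOn_iff.2 hxstarmin
  refine ⟨fun z hz hzmin ↦ hfδ.eq_of_isMinOn hδpos hxstarC hmin hz (isMinOn_iff.2 hzmin), ?_⟩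
  have hγ : ∀ k, γ k ∈ Icc (0 : ℝ) 1 := by
    rcases hstep with ⟨hγ, -⟩ | ⟨hγ, -⟩
    exacts [hγ, fun k ↦ Ioc_subset_Icc_self (hγ k)]
  have hxC : ∀ k, x k ∈ C := fun k ↦ by
    induction k with
    | zero => exact hx0
    | succ k ih => rw [hupdate k]; exact hCcv.add_smul_sub_mem ih (hxbarC k) (hγ k)
  refine hfδ.tendsto_nhds_of_eventually_le hδpos hxstarC hmin hxC fun ε hε ↦ ?_
  rcases hstep with ⟨-, hlm⟩ | ⟨-, hγ0, hsum⟩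
  · exact hfC.frankWolfe_eventually_le_of_lineMin hCbd (fun x _ ↦ hfderiv x) hfUC hxC hxbarC
      hxbarmin hupdate hlm hxstarC hε
  · exact hfC.frankWolfe_eventually_le_of_openLoop hCbd (fun x _ ↦ hfderiv x) hfUC hxC hxbarC
      hxbarmin hupdate hγ hγ0 hsum hxstarC hε

/-- **Norm convergence of Frank–Wolfe iterates under uniform convexity**
(Theorem 3.3 (ii)). If `C` is weakly compact, `f'` is uniformly continuous on `C`, `f` is
uniformly convex with modulus `δ`, and the stepsizes are chosen by line minimization or
by the open loop rule, then the minimization problem has a unique solution `x*` in `C`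
and the Frank–Wolfe iterates converge to `x*` in norm. -/
theorem stmt_6
    {X : Type*} [NormedAddCommGroup X] [NormedSpace ℝ X] [CompleteSpace X]
    (C : Set X) (hCne : C.Nonempty) (hCcl : IsClosed C)
    (hCbd : Bornology.IsBounded C) (hCcv : Convex ℝ C)
    (hCwc : IsCompact (⇑(toWeakSpace ℝ X) '' C))
    (f : X → ℝ) (f' : X → X →L[ℝ] ℝ)
    (hfconv : ConvexOn ℝ Set.univ f)
    (hfderiv : ∀ x : X, HasFDerivAt f (f' x) x)
    (hfUC : UniformContinuousOn f' C)
    (δ : ℝ → ℝ)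
    (hδcont : ContinuousOn δ (Set.Ici 0)) (hδ0 : δ 0 = 0)
    (hδpos : ∀ t > (0 : ℝ), 0 < δ t) (hδnonneg : ∀ t ≥ (0 : ℝ), 0 ≤ δ t)
    (hfUnifConv : ∀ x y : X, ∀ lam : ℝ, 0 < lam → lam < 1 →
      f (lam • x + (1 - lam) • y) ≤
        lam * f x + (1 - lam) * f y - lam * (1 - lam) * δ ‖x - y‖)
    (xstar : X) (hxstarC : xstar ∈ C) (hxstarmin : ∀ y ∈ C, f xstar ≤ f y)
    (x xbar : ℕ → X) (γ : ℕ → ℝ)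
    (hx0 : x 0 ∈ C)
    (hxbarC : ∀ k, xbar k ∈ C)
    (hxbarmin : ∀ k, ∀ y ∈ C, f' (x k) (xbar k) ≤ f' (x k) y)
    (hupdate : ∀ k, x (k + 1) = x k + γ k • (xbar k - x k))
    (hstep :
      ((∀ k, γ k ∈ Set.Icc (0 : ℝ) 1) ∧
        ∀ k, ∀ γ' ∈ Set.Icc (0 : ℝ) 1,
          f (x k + γ k • (xbar k - x k)) ≤ f (x k + γ' • (xbar k - x k)))
      ∨ ((∀ k, γ k ∈ Set.Ioc (0 : ℝ) 1) ∧ Tendsto γ atTop (𝓝 0) ∧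
          Tendsto (fun n => ∑ k ∈ Finset.range n, γ k) atTop atTop)) :
    (∀ z ∈ C, (∀ y ∈ C, f z ≤ f y) → z = xstar) ∧
      Tendsto x atTop (𝓝 xstar) :=
  stmt_6_general C hCbd hCcv f f' hfconv hfderiv hfUC δ hδpos hfUnifConv xstar hxstarC hxstarmin x
    xbar γ hx0 hxbarC hxbarmin hupdate hstep
end

section
/- Suppose the Fréchet derivative f' is uniformly continuous on C, the stepsizes (γ_k) are chosen by line minimization, and f has a sharp minimum point x* ∈ C, i.e., there exists α > 0 with f(x) ≥ f(x*) + α·‖x − x*‖ for all x ∈ C. Assume moreover that for each k the point x̄_k is the unique solution in C of the variational inequality ⟨f'(x_k), x − x̄_k⟩ ≥ 0 for all x ∈ C. Then the sequence (x_k) generated by the Frank–Wolfe algorithm converges to x* in norm with finite termination: there exists k_0 such that x_k = x* for all k > k_0. -/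
/-!
Sharpness makes `x*` a sharp minimizer of the linearization as well:
`f'(x*)(y - x*) ≥ α‖y - x*‖` on `C`. So once `‖f'(xₖ) - f'(x*)‖ < α`, the linear subproblem
has `x̄ₖ = x*`, the exact line search jumps to `x*`, and the iteration stays there.
To get that close, note that the Frank–Wolfe gap `f'(xₖ)(x̄ₖ - xₖ)` is at most
`f(x*) - f(xₖ)` by convexity; while `f(xₖ) ≥ f(x*) + ε`, uniform continuity of `f'` on the
bounded set `C` forces a fixed decrease of `f` per step, which cannot go on forever.
Hence `f(xₖ) < f(x*) + αδ` for some `k`, so `‖xₖ - x*‖ < δ` by sharpness, where `δ` is the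
modulus of uniform continuity of `f'` for `α`.
-/

open Filter Topology Set

section Calculus

variable {X : Type*} [NormedAddCommGroup X] [NormedSpace ℝ X] {f : X → ℝ} {L : X →L[ℝ] ℝ}
  {x v : X}

theorem HasFDerivAt.le_apply_of_add_mul_le (hf : HasFDerivAt f L x) {c : ℝ}
    (h : ∀ t ∈ Icc (0 : ℝ) 1, f x + t * c ≤ f (x + t • v)) : c ≤ L v := by
  set ψ : ℝ → ℝ := fun t => f (x + t • v) - t * c
  have hmin : IsLocalMinOn ψ (Icc 0 1) 0 :=
    IsMinOn.localize fun t ht => by simpa [ψ] using sub_le_sub_right (h t ht) (t * c)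
  have hline : HasDerivAt (fun t : ℝ => x + t • v) v 0 := by
    simpa using ((hasDerivAt_id (0 : ℝ)).smul_const v).const_add x
  have hψ : HasDerivAt ψ (L v - c) 0 :=
    (hf.comp_hasDerivAt_of_eq 0 hline (by simp)).sub (hasDerivAt_mul_const c)
  have hcone : (1 : ℝ) ∈ posTangentConeAt (Icc 0 1) (0 : ℝ) :=
    mem_posTangentConeAt_of_segment_subset (by simp [segment_eq_Icc])
  simpa using hmin.hasFDerivWithinAt_nonneg hψ.hasFDerivAt.hasFDerivWithinAt hcone

theorem ConvexOn.add_apply_sub_le_of_hasFDerivAt {s : Set X} (hfs : ConvexOn ℝ s f)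
    (hf : HasFDerivAt f L x) (hx : x ∈ s) {y : X} (hy : y ∈ s) : f x + L (y - x) ≤ f y := by
  have key := hf.neg.le_apply_of_add_mul_le (v := y - x) (c := f x - f y) fun t ht => by
    have := hfs.2 hx hy (sub_nonneg.2 ht.2) ht.1 (sub_add_cancel 1 t)
    rw [show (1 - t) • x + t • y = x + t • (y - x) by module, smul_eq_mul, smul_eq_mul] at this
    simp only [Pi.neg_apply]
    linarith
  simp only [neg_apply] at key
  linarith

theorem Convex.exists_uniform_descent {C : Set X} (hCcv : Convex ℝ C)
    (hCbd : Bornology.IsBounded C)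
    {f' : X → X →L[ℝ] ℝ} (hf : ∀ x ∈ C, HasFDerivAt f (f' x) x)
    (hf' : UniformContinuousOn f' C) {ε : ℝ} (hε : 0 < ε) :
    ∃ τ > 0, ∀ y ∈ C, ∀ z ∈ C, f' y (z - y) ≤ -ε →
      ∃ t ∈ Icc (0 : ℝ) 1, f (y + t • (z - y)) ≤ f y - τ := by
  set M := Metric.diam C + 1
  have hM : 0 < M := by positivity
  have hdiam : ∀ y ∈ C, ∀ z ∈ C, ‖z - y‖ ≤ M := fun y hy z hz => by
    rw [← dist_eq_norm]; linarith [Metric.dist_le_diam_of_mem hCbd hz hy]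
  obtain ⟨r, hr, hf'r⟩ := Metric.uniformContinuousOn_iff.1 hf' (ε / (2 * M)) (by positivity)
  -- Step `t` keeps `y + t • (z - y)` within `r` of `y`; then the linearization error costs at
  -- most `ε / (2 * M) * (t * M)`, half of the guaranteed decrease `t * ε`.
  set t := min 1 (r / (2 * M))
  have ht : t ∈ Icc (0 : ℝ) 1 := ⟨by positivity, min_le_left _ _⟩
  have htM : t * M < r := by
    calc t * M ≤ r / (2 * M) * M := by gcongr; exact min_le_right _ _
      _ < r := by field_simp; linarith
  refine ⟨t * ε / 2, by positivity, fun y hy z hz hdesc => ⟨t, ht, ?_⟩⟩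
  set w := y + t • (z - y)
  have hseg : segment ℝ y w ⊆ C := hCcv.segment_subset hy (hCcv.add_smul_sub_mem hy hz ht)
  have hyw : ‖w - y‖ ≤ t * M := by
    simpa [w, norm_smul, abs_of_nonneg ht.1] using mul_le_mul_of_nonneg_left (hdiam y hy z hz) ht.1
  have hnear : ∀ u ∈ segment ℝ y w, ‖f' u - f' y‖ ≤ ε / (2 * M) := fun u hu => by
    have : ‖u - y‖ < r := by linarith [norm_sub_le_of_mem_segment hu]
    rw [← dist_eq_norm]; exact (hf'r u (hseg hu) y hy (by rwa [dist_eq_norm])).le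
  have hmv := (convex_segment y w).norm_image_sub_le_of_norm_hasFDerivWithin_le'
    (fun u hu => (hf u (hseg hu)).hasFDerivWithinAt) hnear (left_mem_segment ℝ y w)
    (right_mem_segment ℝ y w)
  have hlin : f' y (w - y) ≤ -(t * ε) := by
    simpa [w] using mul_le_mul_of_nonneg_left hdesc ht.1
  have herr : ε / (2 * M) * ‖w - y‖ ≤ t * ε / 2 := by
    calc ε / (2 * M) * ‖w - y‖ ≤ ε / (2 * M) * (t * M) := by gcongr
      _ = t * ε / 2 := by field_simp
  have := (le_abs_self _).trans hmv
  linarith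

end Calculus

def IsSharpMinOn {X : Type*} [NormedAddCommGroup X] (f : X → ℝ) (C : Set X) (x : X) (α : ℝ) :
    Prop :=
  ∀ y ∈ C, f x + α * ‖y - x‖ ≤ f y

namespace IsSharpMinOn

variable {X : Type*} [NormedAddCommGroup X] {f : X → ℝ} {C : Set X} {x y : X} {α : ℝ}

theorem le (h : IsSharpMinOn f C x α) (hα : 0 ≤ α) (hy : y ∈ C) : f x ≤ f y := by
  linarith [h y hy, mul_nonneg hα (norm_nonneg (y - x))]

theorem eq_of_le (h : IsSharpMinOn f C x α) (hα : 0 < α) (hy : y ∈ C) (hfy : f y ≤ f x) :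
    y = x := by
  have : α * ‖y - x‖ ≤ 0 := by linarith [h y hy]
  exact sub_eq_zero.1 (norm_le_zero_iff.1 (nonpos_of_mul_nonpos_right this hα))

variable [NormedSpace ℝ X]

theorem mul_norm_sub_le_apply (h : IsSharpMinOn f C x α) (hC : Convex ℝ C) (hx : x ∈ C)
    {L : X →L[ℝ] ℝ} (hf : HasFDerivAt f L x) (hy : y ∈ C) : α * ‖y - x‖ ≤ L (y - x) :=
  hf.le_apply_of_add_mul_le fun t ht => by
    have := h _ (hC.add_smul_sub_mem hx hy ht)
    rwa [add_sub_cancel_left, norm_smul, Real.norm_eq_abs, abs_of_nonneg ht.1,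
      mul_left_comm] at this

theorem eq_of_apply_le_of_norm_sub_lt (h : IsSharpMinOn f C x α) (hC : Convex ℝ C)
    (hx : x ∈ C) {L : X →L[ℝ] ℝ} (hf : HasFDerivAt f L x) {ℓ : X →L[ℝ] ℝ} (hy : y ∈ C)
    (hℓy : ℓ y ≤ ℓ x) (hℓ : ‖ℓ - L‖ < α) : y = x := by
  have hsharp := h.mul_norm_sub_le_apply hC hx hf hy
  have hop := (neg_abs_le _).trans' (neg_le_neg ((ℓ - L).le_opNorm (y - x)))
  have : α * ‖y - x‖ ≤ ‖ℓ - L‖ * ‖y - x‖ := by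
    simp only [sub_apply, map_sub] at hsharp hop
    linarith
  have : ‖y - x‖ ≤ 0 := by nlinarith [norm_nonneg (y - x)]
  exact sub_eq_zero.1 (norm_le_zero_iff.1 this)

end IsSharpMinOn

namespace FrankWolfe

variable {X : Type*} [NormedAddCommGroup X] [NormedSpace ℝ X] {C : Set X} {f : X → ℝ}
  {f' : X → X →L[ℝ] ℝ} {x xbar : ℕ → X} {γ : ℕ → ℝ}

theorem mem (hC : Convex ℝ C) (hx0 : x 0 ∈ C) (hxbarC : ∀ k, xbar k ∈ C)
    (hγ : ∀ k, γ k ∈ Icc (0 : ℝ) 1) (hupdate : ∀ k, x (k + 1) = x k + γ k • (xbar k - x k)) :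
    ∀ k, x k ∈ C
  | 0 => hx0
  | k + 1 => hupdate k ▸ hC.add_smul_sub_mem (mem hC hx0 hxbarC hγ hupdate k) (hxbarC k) (hγ k)

theorem exists_lt_add (hCcv : Convex ℝ C) (hCbd : Bornology.IsBounded C)
    (hfconv : ConvexOn ℝ C f) (hf : ∀ x ∈ C, HasFDerivAt f (f' x) x)
    (hf' : UniformContinuousOn f' C) {xstar : X} (hmin : IsMinOn f C xstar) (hxstarC : xstar ∈ C)
    (hxC : ∀ k, x k ∈ C) (hxbarC : ∀ k, xbar k ∈ C)
    (hxbarmin : ∀ k, ∀ y ∈ C, f' (x k) (xbar k) ≤ f' (x k) y)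
    (hupdate : ∀ k, x (k + 1) = x k + γ k • (xbar k - x k))
    (hlinemin : ∀ k, ∀ γ' ∈ Icc (0 : ℝ) 1,
      f (x k + γ k • (xbar k - x k)) ≤ f (x k + γ' • (xbar k - x k)))
    {ε : ℝ} (hε : 0 < ε) : ∃ k, f (x k) < f xstar + ε := by
  by_contra! hfar
  obtain ⟨τ, hτ, hdescent⟩ := hCcv.exists_uniform_descent hCbd hf hf' hε
  have hstep : ∀ k, f (x (k + 1)) ≤ f (x k) - τ := fun k => by
    have hgap : f' (x k) (xbar k - x k) ≤ -ε := by
      have hgrad := hfconv.add_apply_sub_le_of_hasFDerivAt (hf (x k) (hxC k)) (hxC k) hxstarC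
      simp only [map_sub] at hgrad ⊢
      linarith [hxbarmin k xstar hxstarC, hfar k]
    obtain ⟨t, ht, hft⟩ := hdescent (x k) (hxC k) (xbar k) (hxbarC k) hgap
    exact hupdate k ▸ (hlinemin k t ht).trans hft
  have htele : ∀ n : ℕ, f (x n) ≤ f (x 0) - n * τ := fun n => by
    induction n with
    | zero => simp
    | succ n ih => push_cast; linarith [hstep n]
  obtain ⟨n, hn⟩ := exists_nat_gt ((f (x 0) - f xstar) / τ)
  rw [div_lt_iff₀ hτ] at hn
  linarith [htele n, show f xstar ≤ f (x n) from hmin (hxC n)]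

theorem succ_eq_of_norm_sub_lt (hC : Convex ℝ C) {xstar : X}
    (hf : HasFDerivAt f (f' xstar) xstar) {α : ℝ} (hsharp : IsSharpMinOn f C xstar α)
    (hα : 0 < α) (hxstarC : xstar ∈ C)
    (hxC : ∀ k, x k ∈ C) (hxbarC : ∀ k, xbar k ∈ C)
    (hxbarmin : ∀ k, ∀ y ∈ C, f' (x k) (xbar k) ≤ f' (x k) y)
    (hupdate : ∀ k, x (k + 1) = x k + γ k • (xbar k - x k))
    (hlinemin : ∀ k, ∀ γ' ∈ Icc (0 : ℝ) 1,
      f (x k + γ k • (xbar k - x k)) ≤ f (x k + γ' • (xbar k - x k)))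
    {k : ℕ} (hk : ‖f' (x k) - f' xstar‖ < α) : x (k + 1) = xstar := by
  have hxbar : xbar k = xstar :=
    hsharp.eq_of_apply_le_of_norm_sub_lt hC hxstarC hf (hxbarC k)
      (hxbarmin k xstar hxstarC) hk
  refine hsharp.eq_of_le hα (hxC (k + 1)) ?_
  simpa [hupdate k, hxbar] using hlinemin k 1 (right_mem_Icc.2 zero_le_one)

end FrankWolfe

theorem stmt_7_general
    {X : Type*} [NormedAddCommGroup X] [NormedSpace ℝ X]
    (C : Set X)
    (hCbd : Bornology.IsBounded C) (hCcv : Convex ℝ C)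
    (f : X → ℝ) (f' : X → X →L[ℝ] ℝ)
    (hfconv : ConvexOn ℝ Set.univ f)
    (hfderiv : ∀ x : X, HasFDerivAt f (f' x) x)
    (hfUC : UniformContinuousOn f' C)
    (xstar : X) (hxstarC : xstar ∈ C) (α : ℝ) (hα : 0 < α)
    (hsharp : ∀ y ∈ C, f xstar + α * ‖y - xstar‖ ≤ f y)
    (x xbar : ℕ → X) (γ : ℕ → ℝ)
    (hx0 : x 0 ∈ C)
    (hxbarC : ∀ k, xbar k ∈ C)
    (hxbarmin : ∀ k, ∀ y ∈ C, f' (x k) (xbar k) ≤ f' (x k) y)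
    (hγ : ∀ k, γ k ∈ Set.Icc (0 : ℝ) 1)
    (hupdate : ∀ k, x (k + 1) = x k + γ k • (xbar k - x k))
    (hlinemin : ∀ k, ∀ γ' ∈ Set.Icc (0 : ℝ) 1,
      f (x k + γ k • (xbar k - x k)) ≤ f (x k + γ' • (xbar k - x k))) :
    Tendsto x atTop (𝓝 xstar) ∧ ∃ k₀ : ℕ, ∀ k > k₀, x k = xstar := by
  have hsharp : IsSharpMinOn f C xstar α := hsharp
  have hxC := FrankWolfe.mem hCcv hx0 hxbarC hγ hupdate
  have hstep : ∀ k, ‖f' (x k) - f' xstar‖ < α → x (k + 1) = xstar := fun _ =>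
    FrankWolfe.succ_eq_of_norm_sub_lt hCcv (hfderiv xstar) hsharp hα hxstarC hxC hxbarC hxbarmin
      hupdate hlinemin
  obtain ⟨δ, hδ, hf'δ⟩ := Metric.uniformContinuousOn_iff.1 hfUC α hα
  obtain ⟨k, hk⟩ := FrankWolfe.exists_lt_add hCcv hCbd (hfconv.subset (subset_univ C) hCcv)
    (fun y _ => hfderiv y) hfUC (fun _ hy => hsharp.le hα.le hy) hxstarC hxC hxbarC hxbarmin
    hupdate hlinemin (mul_pos hα hδ)
  have hnear : dist (x k) xstar < δ := by
    rw [dist_eq_norm]; nlinarith [hsharp (x k) (hxC k)]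
  have hstay : ∀ j ≥ k + 1, x j = xstar :=
    Nat.le_induction (hstep k (dist_eq_norm (f' (x k)) _ ▸ hf'δ _ (hxC k) _ hxstarC hnear))
      fun j _ hj => hstep j (by simpa [hj] using hα)
  exact ⟨tendsto_atTop_of_eventually_const hstay, k, hstay⟩

/-- **Finite termination of the Frank–Wolfe algorithm at a sharp minimum**
(Theorem 3.3 (iii)). If `f'` is uniformly continuous on `C`, the stepsizes are chosen by
line minimization, `f` has a sharp minimum `x* ∈ C` (i.e. `f(x) ≥ f(x*) + α‖x − x*‖` on
`C` for some `α > 0`), and each `x̄_k` is the unique solution of the variational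
inequality `⟨f'(x_k), x − x̄_k⟩ ≥ 0` for all `x ∈ C`, then `x_k → x*` in norm with
finite termination: `x_k = x*` for all `k` beyond some `k_0`. -/
theorem stmt_7
    {X : Type*} [NormedAddCommGroup X] [NormedSpace ℝ X] [CompleteSpace X]
    (C : Set X) (hCne : C.Nonempty) (hCcl : IsClosed C)
    (hCbd : Bornology.IsBounded C) (hCcv : Convex ℝ C)
    (f : X → ℝ) (f' : X → X →L[ℝ] ℝ)
    (hfconv : ConvexOn ℝ Set.univ f)
    (hfderiv : ∀ x : X, HasFDerivAt f (f' x) x)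
    (hfUC : UniformContinuousOn f' C)
    (xstar : X) (hxstarC : xstar ∈ C) (α : ℝ) (hα : 0 < α)
    (hsharp : ∀ y ∈ C, f xstar + α * ‖y - xstar‖ ≤ f y)
    (x xbar : ℕ → X) (γ : ℕ → ℝ)
    (hx0 : x 0 ∈ C)
    (hxbarC : ∀ k, xbar k ∈ C)
    (hxbarmin : ∀ k, ∀ y ∈ C, f' (x k) (xbar k) ≤ f' (x k) y)
    (hxbarunique : ∀ k, ∀ z ∈ C, (∀ y ∈ C, 0 ≤ f' (x k) (y - z)) → z = xbar k)
    (hγ : ∀ k, γ k ∈ Set.Icc (0 : ℝ) 1)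
    (hupdate : ∀ k, x (k + 1) = x k + γ k • (xbar k - x k))
    (hlinemin : ∀ k, ∀ γ' ∈ Set.Icc (0 : ℝ) 1,
      f (x k + γ k • (xbar k - x k)) ≤ f (x k + γ' • (xbar k - x k))) :
    Tendsto x atTop (𝓝 xstar) ∧ ∃ k₀ : ℕ, ∀ k > k₀, x k = xstar :=
  stmt_7_general C hCbd hCcv f f' hfconv hfderiv hfUC xstar hxstarC α hα hsharp x xbar γ hx0 hxbarC
    hxbarmin hγ hupdate hlinemin
end

section
/- Suppose the Fréchet derivative f' is uniformly continuous on C, C is compact in the norm topology, the stepsizes (γ_k) satisfy the open loop rule, and the set of norm cluster points of the sequence (x_k) generated by the Frank–Wolfe algorithm is finite. Then (x_k) converges in norm to a solution of min_{x∈C} f(x). -/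
/-!
Each step moves `x k` by `γ k • (xbar k - x k)`, and `γ k → 0`, so consecutive iterates get
arbitrarily close. In a compact metric space, a sequence with vanishing steps cannot keep
jumping between finitely many isolated cluster points: once it is close to one cluster point
it stays there, so it converges, to some `p`.

If `p` were not a minimiser, the gradient inequality would give `y ∈ C` with
`f' p (y - p) < 0`. Since `f' (x k) → f' p`, the linear minimisation step then decreases `f`
by at least a fixed multiple of `γ k` for large `k`, and `∑ γ k = ∞` drives `f (x k)` to
`-∞`, contradicting `f (x k) → f p`.
-/

open Filter Topology Set

theorem ConvexOn.apply_sub_le_sub_of_hasFDerivAt {E : Type*} [NormedAddCommGroup E]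
    [NormedSpace ℝ E] {s : Set E} {f : E → ℝ} {f' : E →L[ℝ] ℝ} {x y : E}
    (hf : ConvexOn ℝ s f) (hx : x ∈ s) (hy : y ∈ s) (hf' : HasFDerivAt f f' x) :
    f' (y - x) ≤ f y - f x := by
  set g : ℝ →ᵃ[ℝ] E := AffineMap.lineMap x y
  have hline : ConvexOn ℝ (g ⁻¹' s) (f ∘ g) := hf.comp_affineMap g
  have hderiv : HasDerivAt (f ∘ g) (f' (y - x)) 0 :=
    (by simpa [g] using hf' : HasFDerivAt f f' (g 0)).comp_hasDerivAt _
      AffineMap.hasDerivAt_lineMap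
  simpa [g, slope] using
    hline.le_slope_of_hasDerivAt (by simpa [g] using hx) (by simpa [g] using hy) one_pos hderiv

theorem tendsto_atBot_of_succ_le_sub_mul {a γ : ℕ → ℝ} {c : ℝ} (hc : 0 < c)
    (hγ : Tendsto (fun n => ∑ k ∈ Finset.range n, γ k) atTop atTop)
    (hdec : ∀ᶠ k in atTop, a (k + 1) ≤ a k - c * γ k) : Tendsto a atTop atBot := by
  obtain ⟨N, hN⟩ := eventually_atTop.1 hdec
  set b : ℕ → ℝ := fun n => a n + c * ∑ k ∈ Finset.range n, γ k
  have hb : ∀ n ≥ N, b n ≤ b N := by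
    refine Nat.le_induction le_rfl fun n hn ih => ?_
    simp only [b, Finset.sum_range_succ] at ih ⊢
    linarith [hN n hn]
  refine tendsto_atBot_mono' atTop (eventually_atTop.2 ⟨N, fun n hn => ?_⟩)
    (tendsto_atBot_add_const_left _ (b N) (tendsto_neg_atTop_atBot.comp (hγ.const_mul_atTop hc)))
  have := hb n hn
  simp only [b, Function.comp] at this ⊢
  linarith

theorem IsCompact.tendsto_of_finite_mapClusterPt {X : Type*} [MetricSpace X] {K : Set X}
    {u : ℕ → X} (hK : IsCompact K) (hu : ∀ᶠ n in atTop, u n ∈ K)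
    (hstep : Tendsto (fun n => dist (u (n + 1)) (u n)) atTop (𝓝 0))
    (hfin : {p | MapClusterPt p atTop u}.Finite) : ∃ p ∈ K, Tendsto u atTop (𝓝 p) := by
  set S := {p | MapClusterPt p atTop u}
  obtain ⟨p, hpK, hpS⟩ := hK.exists_mapClusterPt (tendsto_principal.2 hu)
  obtain ⟨ε, hε, hisol⟩ := Metric.isOpen_iff.1 (hfin.sdiff (t := {p})).isClosed.isOpen_compl p
    (by simp)
  have hisol' : ∀ q ∈ S, dist q p < ε → q = p := fun q hq hqp => by
    simpa [hq] using hisol (Metric.mem_ball.2 hqp)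
  obtain ⟨r, hr, hrε⟩ : ∃ r, 0 < r ∧ 3 * r = ε := ⟨ε / 3, by positivity, by ring⟩
  have hnear : ∀ᶠ n in atTop, ∃ q ∈ S, dist (u n) q < r := by
    have hU : IsOpen (⋃ q ∈ S, Metric.ball q r) := isOpen_biUnion fun q _ => Metric.isOpen_ball
    have := (hK.tendsto_nhdsSet_of_mapClusterPt hu fun q _ hq => hq).eventually
      (hU.mem_nhdsSet.2 fun q hq => mem_biUnion hq (Metric.mem_ball_self hr))
    exact this.mono fun n hn => by simpa using mem_iUnion₂.1 hn
  obtain ⟨N, hN⟩ := (hnear.and (hstep.eventually (gt_mem_nhds hr))).exists_forall_of_atTop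
  obtain ⟨n₀, hn₀N, hn₀⟩ := frequently_atTop.1 (hpS.frequently (Metric.ball_mem_nhds p hr)) N
  -- consecutive iterates are closer than `r`, so the sequence cannot leave `ball p r` for
  -- `ball q r` with `q ≠ p`: these balls are `r` apart
  have htrap : ∀ n ≥ n₀, dist (u n) p < r := by
    refine Nat.le_induction hn₀ fun n hn ih => ?_
    obtain ⟨⟨q, hqS, hq⟩, -⟩ := hN (n + 1) (by omega)
    have hstepn := (hN n (by omega)).2
    have hqp : q = p := hisol' q hqS <| by
      linarith [dist_triangle4 q (u (n + 1)) (u n) p, dist_comm q (u (n + 1))]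
    rwa [← hqp]
  refine ⟨p, hpK, hK.tendsto_nhds_of_unique_mapClusterPt hu fun q _ hq => hisol' q hq ?_⟩
  have := Metric.isClosed_closedBall.mem_of_mapClusterPt hq
    (eventually_atTop.2 ⟨n₀, fun n hn => (htrap n hn).le⟩)
  linarith [Metric.mem_closedBall.1 this]

section FrankWolfe

variable {X : Type*} [NormedAddCommGroup X] [NormedSpace ℝ X] {C : Set X} {x xbar : ℕ → X}
  {γ : ℕ → ℝ}

theorem Convex.frankWolfe_mem (hC : Convex ℝ C) (hx0 : x 0 ∈ C) (hxbarC : ∀ k, xbar k ∈ C)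
    (hupdate : ∀ k, x (k + 1) = x k + γ k • (xbar k - x k)) (hγ : ∀ k, γ k ∈ Icc 0 1) (k : ℕ) :
    x k ∈ C := by
  induction k with
  | zero => exact hx0
  | succ k ih => rw [hupdate k]; exact hC.add_smul_sub_mem ih (hxbarC k) (hγ k)

variable {f : X → ℝ} {f' : X → X →L[ℝ] ℝ}

theorem frankWolfe_descent (hf : ConvexOn ℝ univ f) (hf' : ∀ x, HasFDerivAt f (f' x) x)
    (hupdate : ∀ k, x (k + 1) = x k + γ k • (xbar k - x k)) (k : ℕ) :
    f (x (k + 1)) ≤ f (x k) + γ k * f' (x (k + 1)) (xbar k - x k) := by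
  have := hf.apply_sub_le_sub_of_hasFDerivAt (mem_univ _) (mem_univ (x k)) (hf' (x (k + 1)))
  rw [hupdate k, show x k - (x k + γ k • (xbar k - x k)) = -(γ k • (xbar k - x k)) by abel,
    map_neg, map_smul, smul_eq_mul] at this
  rw [hupdate k]
  linarith

theorem frankWolfe_isMinOn_of_tendsto (hf : ConvexOn ℝ univ f)
    (hf' : ∀ x, HasFDerivAt f (f' x) x)
    (hxbarmin : ∀ k, ∀ y ∈ C, f' (x k) (xbar k) ≤ f' (x k) y)
    (hupdate : ∀ k, x (k + 1) = x k + γ k • (xbar k - x k)) (hγ : ∀ k, 0 ≤ γ k)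
    (hγsum : Tendsto (fun n => ∑ k ∈ Finset.range n, γ k) atTop atTop)
    (hbdd : IsBoundedUnder (· ≤ ·) atTop fun k => ‖xbar k - x k‖) {p : X}
    (hx : Tendsto x atTop (𝓝 p)) (hf'x : Tendsto (fun k => f' (x k)) atTop (𝓝 (f' p))) :
    IsMinOn f C p := by
  refine isMinOn_iff.2 fun y hy => ?_
  by_contra! hlt
  set L := f' p (y - p)
  have hL : L < 0 :=
    (hf.apply_sub_le_sub_of_hasFDerivAt (mem_univ p) (mem_univ y) (hf' p)).trans_lt (by linarith)
  -- `frankWolfe_descent` evaluates `f'` at `x (k + 1)`, whereas `xbar k` is optimal for `f' (x k)`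
  have herr : Tendsto (fun k => (f' (x (k + 1)) - f' (x k)) (xbar k - x k)) atTop (𝓝 0) := by
    have : Tendsto (fun k => f' (x (k + 1)) - f' (x k)) atTop (𝓝 0) := by
      simpa using (hf'x.comp (tendsto_add_atTop_nat 1)).sub hf'x
    exact this.op_zero_isBoundedUnder_le hbdd (fun A v => A v) fun A v => A.le_opNorm v
  have hlin : Tendsto (fun k => f' (x k) (y - x k)) atTop (𝓝 L) :=
    (isBoundedBilinearMap_apply.continuous.tendsto _).comp
      (hf'x.prodMk_nhds (tendsto_const_nhds.sub hx))
  have hdec : ∀ᶠ k in atTop, f (x (k + 1)) ≤ f (x k) - (-L / 2) * γ k := by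
    filter_upwards [(hlin.add herr).eventually (gt_mem_nhds (by linarith : L + 0 < L / 2))]
      with k hk
    have hmin : f' (x k) (xbar k - x k) ≤ f' (x k) (y - x k) := by
      simpa only [map_sub, sub_le_sub_iff_right] using hxbarmin k y hy
    have hslope : f' (x (k + 1)) (xbar k - x k) ≤ L / 2 := by
      simp only [sub_apply] at hk
      linarith
    nlinarith [frankWolfe_descent hf hf' hupdate k, hγ k]
  exact not_tendsto_atBot_of_tendsto_nhds ((hf' p).continuousAt.tendsto.comp hx)
    (tendsto_atBot_of_succ_le_sub_mul (by linarith) hγsum hdec)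

end FrankWolfe

theorem stmt_8_general
    {X : Type*} [NormedAddCommGroup X] [NormedSpace ℝ X]
    (C : Set X) (hCcv : Convex ℝ C)
    (hCcomp : IsCompact C)
    (f : X → ℝ) (f' : X → X →L[ℝ] ℝ)
    (hfconv : ConvexOn ℝ Set.univ f)
    (hfderiv : ∀ x : X, HasFDerivAt f (f' x) x)
    (hfUC : UniformContinuousOn f' C)
    (x xbar : ℕ → X) (γ : ℕ → ℝ)
    (hx0 : x 0 ∈ C)
    (hxbarC : ∀ k, xbar k ∈ C)
    (hxbarmin : ∀ k, ∀ y ∈ C, f' (x k) (xbar k) ≤ f' (x k) y)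
    (hupdate : ∀ k, x (k + 1) = x k + γ k • (xbar k - x k))
    (hγ : ∀ k, γ k ∈ Set.Ioc (0 : ℝ) 1)
    (hγ0 : Tendsto γ atTop (𝓝 0))
    (hγsum : Tendsto (fun n => ∑ k ∈ Finset.range n, γ k) atTop atTop)
    (hcluster : {p : X | MapClusterPt p atTop x}.Finite) :
    ∃ p ∈ C, (∀ y ∈ C, f p ≤ f y) ∧ Tendsto x atTop (𝓝 p) := by
  have hxC : ∀ k, x k ∈ C :=
    hCcv.frankWolfe_mem hx0 hxbarC hupdate fun k => Ioc_subset_Icc_self (hγ k)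
  have hbdd : IsBoundedUnder (· ≤ ·) atTop fun k => ‖xbar k - x k‖ := by
    obtain ⟨M, hM⟩ := isBounded_iff_forall_norm_le.1 (hCcomp.isBounded.sub hCcomp.isBounded)
    exact isBoundedUnder_of ⟨M, fun k => hM _ (sub_mem_sub (hxbarC k) (hxC k))⟩
  have hstep : Tendsto (fun k => dist (x (k + 1)) (x k)) atTop (𝓝 0) := by
    simpa [dist_eq_norm, hupdate] using (hγ0.zero_smul_isBoundedUnder_le hbdd).norm
  obtain ⟨p, hpC, hxp⟩ :=
    hCcomp.tendsto_of_finite_mapClusterPt (Eventually.of_forall hxC) hstep hcluster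
  have hf'x : Tendsto (fun k => f' (x k)) atTop (𝓝 (f' p)) :=
    (hfUC.continuousOn p hpC).tendsto.comp
      (tendsto_nhdsWithin_iff.2 ⟨hxp, Eventually.of_forall hxC⟩)
  exact ⟨p, hpC, isMinOn_iff.1 <| frankWolfe_isMinOn_of_tendsto hfconv hfderiv hxbarmin hupdate
    (fun k => (hγ k).1.le) hγsum hbdd hxp hf'x, hxp⟩

/-- **Norm convergence of Frank–Wolfe iterates with finitely many cluster points**
(Theorem 3.3 (iv)). If `C` is compact in the norm topology, `f'` is uniformly continuous
on `C`, the stepsizes satisfy the open loop rule, and the sequence `(x_k)` has only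
finitely many (norm) cluster points, then `(x_k)` converges in norm to a solution of
`min_{x ∈ C} f(x)`. -/
theorem stmt_8
    {X : Type*} [NormedAddCommGroup X] [NormedSpace ℝ X] [CompleteSpace X]
    (C : Set X) (hCne : C.Nonempty) (hCcl : IsClosed C)
    (hCbd : Bornology.IsBounded C) (hCcv : Convex ℝ C)
    (hCcomp : IsCompact C)
    (f : X → ℝ) (f' : X → X →L[ℝ] ℝ)
    (hfconv : ConvexOn ℝ Set.univ f)
    (hfderiv : ∀ x : X, HasFDerivAt f (f' x) x)
    (hfUC : UniformContinuousOn f' C)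
    (xstar : X) (hxstarC : xstar ∈ C) (hxstarmin : ∀ y ∈ C, f xstar ≤ f y)
    (x xbar : ℕ → X) (γ : ℕ → ℝ)
    (hx0 : x 0 ∈ C)
    (hxbarC : ∀ k, xbar k ∈ C)
    (hxbarmin : ∀ k, ∀ y ∈ C, f' (x k) (xbar k) ≤ f' (x k) y)
    (hupdate : ∀ k, x (k + 1) = x k + γ k • (xbar k - x k))
    (hγ : ∀ k, γ k ∈ Set.Ioc (0 : ℝ) 1)
    (hγ0 : Tendsto γ atTop (𝓝 0))
    (hγsum : Tendsto (fun n => ∑ k ∈ Finset.range n, γ k) atTop atTop)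
    (hcluster : {p : X | MapClusterPt p atTop x}.Finite) :
    ∃ p ∈ C, (∀ y ∈ C, f p ≤ f y) ∧ Tendsto x atTop (𝓝 p) :=
  stmt_8_general C hCcv hCcomp f f' hfconv hfderiv hfUC x xbar γ hx0 hxbarC hxbarmin hupdate hγ hγ0
    hγsum hcluster
end

section
/- Let f : X → ℝ be Fréchet differentiable and uniformly convex with modulus δ, i.e., f(λx + (1−λ)y) ≤ λf(x) + (1−λ)f(y) − λ(1−λ)δ(‖x−y‖) for all λ ∈ (0,1) and x, y ∈ X. Then f(x) ≥ f(y) + ⟨f'(y), x − y⟩ + δ(‖x − y‖) for all x, y ∈ X. -/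
/-!
Along the segment `t ↦ y + t • (x - y)` uniform convexity bounds the difference quotient:
`(f (y + t • (x - y)) - f y) / t ≤ f x - f y - (1 - t) δ ‖x - y‖` for `t ∈ (0, 1)`.
Letting `t → 0⁺`, the left side tends to the directional derivative `f' y (x - y)`.
-/

open Filter Set Topology

theorem HasLineDerivAt.add_add_le_of_le_segment {E : Type*} [AddCommGroup E] [Module ℝ E]
    {f : E → ℝ} {x y : E} {d c : ℝ} (hf : HasLineDerivAt ℝ f d y (x - y))
    (hseg : ∀ t ∈ Ioo (0 : ℝ) 1,
      f (t • x + (1 - t) • y) ≤ t * f x + (1 - t) * f y - t * (1 - t) * c) :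
    f y + d + c ≤ f x := by
  have hslope := hf.tendsto_slope_zero_right
  have hbound : Tendsto (fun t : ℝ ↦ f x - f y - (1 - t) * c) (𝓝[>] 0)
      (𝓝 (f x - f y - c)) := by
    have hcont : Continuous fun t : ℝ ↦ f x - f y - (1 - t) * c := by fun_prop
    simpa using (hcont.continuousWithinAt (s := Ioi 0) (x := 0)).tendsto
  have hquot : ∀ᶠ t in 𝓝[>] (0 : ℝ),
      t⁻¹ • (f (y + t • (x - y)) - f y) ≤ f x - f y - (1 - t) * c := by
    filter_upwards [Ioo_mem_nhdsGT (zero_lt_one' ℝ)] with t ht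
    have hpt : y + t • (x - y) = t • x + (1 - t) • y := by module
    rw [hpt, smul_eq_mul, inv_mul_le_iff₀ ht.1]
    linarith [hseg t ht]
  linarith [le_of_tendsto_of_tendsto hslope hbound hquot]

theorem stmt_9_general
    {X : Type*} [NormedAddCommGroup X] [NormedSpace ℝ X]
    (f : X → ℝ) (f' : X → X →L[ℝ] ℝ)
    (hfderiv : ∀ x : X, HasFDerivAt f (f' x) x)
    (δ : ℝ → ℝ)
    (hfUnifConv : ∀ x y : X, ∀ lam : ℝ, 0 < lam → lam < 1 →
      f (lam • x + (1 - lam) • y) ≤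
        lam * f x + (1 - lam) * f y - lam * (1 - lam) * δ ‖x - y‖) :
    ∀ x y : X, f y + f' y (x - y) + δ ‖x - y‖ ≤ f x := fun x y ↦
  ((hfderiv y).hasLineDerivAt (x - y)).add_add_le_of_le_segment
    fun t ht ↦ hfUnifConv x y t ht.1 ht.2

/-- **Subgradient inequality for uniformly convex functions.** If `f` is Fréchet
differentiable and uniformly convex with modulus `δ`, i.e.
`f(λx + (1−λ)y) ≤ λ f(x) + (1−λ) f(y) − λ(1−λ) δ(‖x−y‖)` for all `λ ∈ (0,1)` and
`x, y`, then `f(x) ≥ f(y) + ⟨f'(y), x − y⟩ + δ(‖x − y‖)` for all `x, y`. -/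
theorem stmt_9
    {X : Type*} [NormedAddCommGroup X] [NormedSpace ℝ X] [CompleteSpace X]
    (f : X → ℝ) (f' : X → X →L[ℝ] ℝ)
    (hfderiv : ∀ x : X, HasFDerivAt f (f' x) x)
    (δ : ℝ → ℝ)
    (hδcont : ContinuousOn δ (Set.Ici 0)) (hδ0 : δ 0 = 0)
    (hδpos : ∀ t > (0 : ℝ), 0 < δ t) (hδnonneg : ∀ t ≥ (0 : ℝ), 0 ≤ δ t)
    (hfUnifConv : ∀ x y : X, ∀ lam : ℝ, 0 < lam → lam < 1 →
      f (lam • x + (1 - lam) • y) ≤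
        lam * f x + (1 - lam) * f y - lam * (1 - lam) * δ ‖x - y‖) :
    ∀ x y : X, f y + f' y (x - y) + δ ‖x - y‖ ≤ f x :=
  stmt_9_general f f' hfderiv δ hfUnifConv
end

section
/- Suppose the Fréchet derivative f' of f is uniformly continuous on C. Then for every σ ∈ (1,2], every x, s ∈ C and every γ ∈ (0,1], with y = x + γ(s − x), one has (σ/γ^σ)·(f(y) − f(x) − ⟨f'(x), y − x⟩) ≤ sup_{0 < γ' ≤ 1} (σ/γ'^σ)·∫_0^{γ'·diam(C)} ω(f', τ) dτ, where ω(f', τ) := sup{‖f'(x_1) − f'(x_2)‖ : x_1, x_2 ∈ C, ‖x_1 − x_2‖ ≤ τ} is the modulus of continuity of f' on C and diam(C) = sup{‖u − v‖ : u, v ∈ C}. In other words, the curvature constant of order σ of f over C, C_f^{(σ)} := sup{(σ/γ^σ)·(f(x + γ(s−x)) − f(x) − ⟨f'(x), γ(s−x)⟩) : x, s ∈ C, γ ∈ (0,1]}, satisfies C_f^{(σ)} ≤ sup_{0 < γ ≤ 1} (σ/γ^σ)·∫_0^{γ·diam(C)} ω(f', τ) dτ. -/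
/-!
Along the segment from `x` to `y = x + γ(s - x)`, the fundamental theorem of calculus writes the
Taylor remainder `f y - f x - ⟨f' x, y - x⟩` as `∫₀¹ ⟨f'(x + t(y - x)) - f' x, y - x⟩ dt`. The
integrand is at most `ω(f', t‖y - x‖)‖y - x‖`; substituting `τ = t‖y - x‖` and using that `ω(f', ·)`
is nonnegative and monotone bounds the remainder by `∫₀^{γ·diam C} ω(f', τ) dτ`. The suprema
defining `ω(f', ·)` are finite because, by chaining short steps along segments, a uniformly
continuous map has bounded image on a bounded convex set.
-/

open Set intervalIntegral

section UniformContinuity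

variable {E β : Type*} [SeminormedAddCommGroup E] [NormedSpace ℝ E] [PseudoMetricSpace β]
  {C : Set E} {g : E → β}

theorem Convex.dist_le_mul_of_forall_norm_sub_le (hC : Convex ℝ C) {δ ε : ℝ}
    (hg : ∀ u ∈ C, ∀ v ∈ C, ‖u - v‖ ≤ δ → dist (g u) (g v) ≤ ε) {n : ℕ} (hn : n ≠ 0)
    {u v : E} (hu : u ∈ C) (hv : v ∈ C) (huv : ‖u - v‖ ≤ n * δ) :
    dist (g u) (g v) ≤ n * ε := by
  have hn' : (0 : ℝ) < n := Nat.cast_pos.2 (Nat.pos_of_ne_zero hn)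
  set p : ℕ → E := fun k => u + ((k : ℝ) / n) • (v - u) with hp
  have hpC : ∀ k ≤ n, p k ∈ C := fun k hk =>
    hC.add_smul_sub_mem hu hv ⟨by positivity, div_le_one_of_le₀ (by exact_mod_cast hk) hn'.le⟩
  have hstep : ∀ k, ‖p k - p (k + 1)‖ ≤ δ := fun k => by
    have : p k - p (k + 1) = (1 / (n : ℝ)) • (u - v) := by
      simp only [hp, Nat.cast_succ, add_div, add_smul, ← neg_sub v u, smul_neg]
      abel
    rw [this, norm_smul, Real.norm_of_nonneg (by positivity), one_div_mul_eq_div,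
      div_le_iff₀ hn', mul_comm]
    exact huv
  have hchain := dist_le_range_sum_of_dist_le (f := fun k => g (p k)) n (d := fun _ => ε)
    fun {k} hk => hg _ (hpC k hk.le) _ (hpC (k + 1) hk) (hstep k)
  simpa [hp, div_self hn'.ne'] using hchain

theorem Convex.isBounded_image_of_uniformContinuousOn (hC : Convex ℝ C)
    (hCb : Bornology.IsBounded C) (hg : UniformContinuousOn g C) :
    Bornology.IsBounded (g '' C) := by
  obtain ⟨δ, hδ, hgδ⟩ := Metric.uniformContinuousOn_iff_le.1 hg 1 one_pos
  obtain ⟨R, hR⟩ := Metric.isBounded_iff.1 hCb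
  set n : ℕ := ⌈R / δ⌉₊ + 1
  refine Metric.isBounded_iff.2 ⟨n * 1, ?_⟩
  rintro _ ⟨u, hu, rfl⟩ _ ⟨v, hv, rfl⟩
  refine hC.dist_le_mul_of_forall_norm_sub_le (g := g) (δ := δ) (n := n)
    (fun a ha b hb hab => hgδ a ha b hb (by rwa [dist_eq_norm])) (Nat.succ_ne_zero _) hu hv ?_
  calc ‖u - v‖ = dist u v := (dist_eq_norm u v).symm
    _ ≤ R := hR hu hv
    _ ≤ ⌈R / δ⌉₊ * δ := (div_le_iff₀ hδ).1 (Nat.le_ceil _)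
    _ ≤ n * δ := by gcongr; exact_mod_cast Nat.le_succ _

end UniformContinuity

section ModulusOfContinuity

variable {E F : Type*} [SeminormedAddCommGroup E] [SeminormedAddCommGroup F] {g : E → F}
  {C : Set E}

/-- The paper's `ω(g, τ)`, over pairs of points of `C`; `sSup` is the junk value `0` when the set
is unbounded above. -/
noncomputable def modulusOfContinuityOn (g : E → F) (C : Set E) (τ : ℝ) : ℝ :=
  sSup {d : ℝ | ∃ x₁ ∈ C, ∃ x₂ ∈ C, ‖x₁ - x₂‖ ≤ τ ∧ d = ‖g x₁ - g x₂‖}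

theorem modulusOfContinuityOn_nonneg (τ : ℝ) : 0 ≤ modulusOfContinuityOn g C τ :=
  Real.sSup_nonneg <| by
    rintro _ ⟨_, _, _, _, _, rfl⟩
    exact norm_nonneg _

theorem norm_sub_le_modulusOfContinuityOn (hb : Bornology.IsBounded (g '' C)) {x₁ x₂ : E}
    (h₁ : x₁ ∈ C) (h₂ : x₂ ∈ C) {τ : ℝ} (hτ : ‖x₁ - x₂‖ ≤ τ) :
    ‖g x₁ - g x₂‖ ≤ modulusOfContinuityOn g C τ := by
  obtain ⟨K, hK⟩ := Metric.isBounded_iff.1 hb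
  refine le_csSup ⟨K, ?_⟩ ⟨x₁, h₁, x₂, h₂, hτ, rfl⟩
  rintro _ ⟨y₁, hy₁, y₂, hy₂, -, rfl⟩
  rw [← dist_eq_norm]
  exact hK (mem_image_of_mem g hy₁) (mem_image_of_mem g hy₂)

theorem monotone_modulusOfContinuityOn (hb : Bornology.IsBounded (g '' C)) :
    Monotone (modulusOfContinuityOn g C) := fun _ _ hab =>
  Real.sSup_le (by
    rintro _ ⟨x₁, h₁, x₂, h₂, hτ, rfl⟩
    exact norm_sub_le_modulusOfContinuityOn hb h₁ h₂ (hτ.trans hab))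
    (modulusOfContinuityOn_nonneg _)

theorem monotoneOn_integral_modulusOfContinuityOn (hb : Bornology.IsBounded (g '' C)) :
    MonotoneOn (fun r => ∫ τ in (0 : ℝ)..r, modulusOfContinuityOn g C τ) (Ici 0) :=
  fun _ ha _ _ hab =>
    integral_mono_interval le_rfl ha hab
      (Filter.Eventually.of_forall fun _ => modulusOfContinuityOn_nonneg _)
      (monotone_modulusOfContinuityOn hb).intervalIntegrable

end ModulusOfContinuity

section TaylorRemainder

variable {E F : Type*} [NormedAddCommGroup E] [NormedSpace ℝ E] [NormedAddCommGroup F]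
  [NormedSpace ℝ F] [CompleteSpace F] {C : Set E} {f : E → F} {f' : E → E →L[ℝ] F} {x y : E}

theorem Convex.sub_sub_fderiv_eq_integral (hC : Convex ℝ C)
    (hf : ∀ z ∈ C, HasFDerivAt f (f' z) z) (hf' : ContinuousOn f' C) (hx : x ∈ C) (hy : y ∈ C) :
    f y - f x - f' x (y - x) = ∫ t in (0 : ℝ)..1, (f' (x + t • (y - x)) - f' x) (y - x) := by
  have hseg : ∀ t ∈ uIcc (0 : ℝ) 1, x + t • (y - x) ∈ C := fun t ht =>
    hC.add_smul_sub_mem hx hy (by rwa [uIcc_of_le zero_le_one] at ht)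
  have hderiv : ∀ t ∈ uIcc (0 : ℝ) 1, HasDerivAt (fun t : ℝ => f (x + t • (y - x)))
      (f' (x + t • (y - x)) (y - x)) t := fun t ht =>
    (hf _ (hseg t ht)).comp_hasDerivAt t
      (by simpa using ((hasDerivAt_id t).smul_const (y - x)).const_add x)
  have hint :
      IntervalIntegrable (fun t : ℝ => f' (x + t • (y - x)) (y - x)) MeasureTheory.volume 0 1 :=
    ContinuousOn.intervalIntegrable <|
      (hf'.comp (by fun_prop) hseg).clm_apply continuousOn_const
  simp only [sub_apply]
  rw [integral_sub hint intervalIntegrable_const, integral_eq_sub_of_hasDerivAt hderiv hint]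
  simp

theorem Convex.norm_sub_sub_fderiv_le_integral_modulusOfContinuityOn (hC : Convex ℝ C)
    (hf : ∀ z ∈ C, HasFDerivAt f (f' z) z) (hf' : ContinuousOn f' C)
    (hb : Bornology.IsBounded (f' '' C)) (hx : x ∈ C) (hy : y ∈ C) :
    ‖f y - f x - f' x (y - x)‖ ≤ ∫ τ in (0 : ℝ)..‖y - x‖, modulusOfContinuityOn f' C τ := by
  set L := ‖y - x‖
  set ω := modulusOfContinuityOn f' C
  have hpt : ∀ t ∈ Ioc (0 : ℝ) 1, ‖(f' (x + t • (y - x)) - f' x) (y - x)‖ ≤ ω (t * L) * L :=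
    fun t ht => by
      have hdist : ‖x + t • (y - x) - x‖ ≤ t * L := by
        rw [add_sub_cancel_left, norm_smul, Real.norm_of_nonneg ht.1.le]
      refine (ContinuousLinearMap.le_opNorm _ _).trans
        (mul_le_mul_of_nonneg_right ?_ (norm_nonneg _))
      exact norm_sub_le_modulusOfContinuityOn hb
        (hC.add_smul_sub_mem hx hy (Ioc_subset_Icc_self ht)) hx hdist
  have hmono : Monotone fun t => ω (t * L) * L := fun a b hab =>
    mul_le_mul_of_nonneg_right
      (monotone_modulusOfContinuityOn hb (mul_le_mul_of_nonneg_right hab (norm_nonneg _)))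
      (norm_nonneg _)
  have hsubst : ∫ t in (0 : ℝ)..1, ω (t * L) * L = ∫ τ in (0 : ℝ)..L, ω τ := by
    rw [integral_mul_const, mul_comm, ← smul_eq_mul]
    simp
  rw [hC.sub_sub_fderiv_eq_integral hf hf' hx hy, ← hsubst]
  exact norm_integral_le_of_norm_le zero_le_one (Filter.Eventually.of_forall hpt)
    hmono.intervalIntegrable

end TaylorRemainder

theorem stmt_10_general
    {X : Type*} [NormedAddCommGroup X] [NormedSpace ℝ X]
    (C : Set X)
    (hCbd : Bornology.IsBounded C) (hCcv : Convex ℝ C)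
    (f : X → ℝ) (f' : X → X →L[ℝ] ℝ)
    (hfderiv : ∀ x : X, HasFDerivAt f (f' x) x)
    (hfUC : UniformContinuousOn f' C)
    (ω : ℝ → ℝ)
    (hω : ∀ τ : ℝ, ω τ =
      sSup {d : ℝ | ∃ x₁ ∈ C, ∃ x₂ ∈ C, ‖x₁ - x₂‖ ≤ τ ∧ d = ‖f' x₁ - f' x₂‖})
    (σ : ℝ) (hσ : σ ∈ Set.Ioc (1 : ℝ) 2)
    (M : ℝ)
    (hM : ∀ γ' ∈ Set.Ioc (0 : ℝ) 1,
      (σ / γ' ^ σ) * ∫ τ in (0 : ℝ)..(γ' * Metric.diam C), ω τ ≤ M) :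
    ∀ x ∈ C, ∀ s ∈ C, ∀ γ ∈ Set.Ioc (0 : ℝ) 1,
      (σ / γ ^ σ) *
          (f (x + γ • (s - x)) - f x - f' x ((x + γ • (s - x)) - x)) ≤ M := by
  intro x hx s hs γ hγ
  obtain rfl : ω = modulusOfContinuityOn f' C := funext hω
  have hb := hCcv.isBounded_image_of_uniformContinuousOn hCbd hfUC
  have hdist : ‖x + γ • (s - x) - x‖ ≤ γ * Metric.diam C := by
    rw [add_sub_cancel_left, norm_smul, Real.norm_of_nonneg hγ.1.le, ← dist_eq_norm]
    exact mul_le_mul_of_nonneg_left (Metric.dist_le_diam_of_mem hCbd hs hx) hγ.1.le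
  have hremainder := (le_abs_self _).trans <|
    (hCcv.norm_sub_sub_fderiv_le_integral_modulusOfContinuityOn (fun z _ => hfderiv z)
      hfUC.continuousOn hb hx (hCcv.add_smul_sub_mem hx hs ⟨hγ.1.le, hγ.2⟩)).trans <|
    monotoneOn_integral_modulusOfContinuityOn hb (norm_nonneg _)
      (mul_nonneg hγ.1.le Metric.diam_nonneg) hdist
  calc (σ / γ ^ σ) * (f (x + γ • (s - x)) - f x - f' x (x + γ • (s - x) - x))
      ≤ (σ / γ ^ σ) * ∫ τ in (0 : ℝ)..(γ * Metric.diam C), modulusOfContinuityOn f' C τ :=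
        mul_le_mul_of_nonneg_left hremainder
          (div_nonneg (by linarith [hσ.1]) (Real.rpow_nonneg hγ.1.le σ))
    _ ≤ M := hM γ hγ

/-- **Estimate of the curvature constant of order `σ` by the modulus of continuity**
(Proposition 4.5). If `f'` is uniformly continuous on `C` with modulus of continuity
`ω(f',·)`, then for every `σ ∈ (1,2]` the curvature constant of order `σ` of `f` over
`C` is bounded by `sup_{0<γ'≤1} (σ/γ'^σ) ∫_0^{γ'·diam C} ω(f',τ) dτ`; formalized as:
every upper bound `M` of the family `(σ/γ'^σ) ∫_0^{γ'·diam C} ω(f',τ) dτ`, `γ' ∈ (0,1]`,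
bounds `(σ/γ^σ)(f(y) − f(x) − ⟨f'(x), y − x⟩)` for all `x, s ∈ C`, `γ ∈ (0,1]`, with
`y = x + γ(s − x)`. -/
theorem stmt_10
    {X : Type*} [NormedAddCommGroup X] [NormedSpace ℝ X] [CompleteSpace X]
    (C : Set X) (hCne : C.Nonempty) (hCcl : IsClosed C)
    (hCbd : Bornology.IsBounded C) (hCcv : Convex ℝ C)
    (f : X → ℝ) (f' : X → X →L[ℝ] ℝ)
    (hfderiv : ∀ x : X, HasFDerivAt f (f' x) x)
    (hfUC : UniformContinuousOn f' C)
    (ω : ℝ → ℝ)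
    (hω : ∀ τ : ℝ, ω τ =
      sSup {d : ℝ | ∃ x₁ ∈ C, ∃ x₂ ∈ C, ‖x₁ - x₂‖ ≤ τ ∧ d = ‖f' x₁ - f' x₂‖})
    (σ : ℝ) (hσ : σ ∈ Set.Ioc (1 : ℝ) 2)
    (M : ℝ)
    (hM : ∀ γ' ∈ Set.Ioc (0 : ℝ) 1,
      (σ / γ' ^ σ) * ∫ τ in (0 : ℝ)..(γ' * Metric.diam C), ω τ ≤ M) :
    ∀ x ∈ C, ∀ s ∈ C, ∀ γ ∈ Set.Ioc (0 : ℝ) 1,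
      (σ / γ ^ σ) *
          (f (x + γ • (s - x)) - f x - f' x ((x + γ • (s - x)) - x)) ≤ M :=
  stmt_10_general C hCbd hCcv f f' hfderiv hfUC ω hω σ hσ M hM
end

section
/- Suppose f' is ν-Hölder continuous on C for some ν ∈ (0,1] with constant L_ν, i.e., ‖f'(x_1) − f'(x_2)‖ ≤ L_ν·‖x_1 − x_2‖^ν for all x_1, x_2 ∈ C. Then the curvature constant of order σ = 1+ν of f over C satisfies C_f^{(1+ν)} ≤ L_ν·δ^{1+ν}, where δ = diam(C); that is, f(x + γ(s − x)) ≤ f(x) + ⟨f'(x), γ(s − x)⟩ + (γ^{1+ν}/(1+ν))·L_ν·δ^{1+ν} for all x, s ∈ C and γ ∈ (0,1]. In particular, if f' is L-Lipschitz on C, then C_f^{(2)} ≤ L·δ². -/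
/-!
Restricted to the segment from `x` to `y = x + γ (s - x)`, the Hölder condition says that the
directional derivative `t ↦ f'(x + t (y - x)) (y - x)` exceeds its value at `0` by at most
`L ‖y - x‖^(1+ν) t^ν`; integrating over `[0, 1]` gives the remainder `L ‖y - x‖^(1+ν) / (1+ν)`,
and `‖y - x‖ ≤ γ diam C`.
-/

open Set

/-- The defining inequality of the curvature constant of order `σ`: `M` bounds `C_f^{(σ)}`. -/
def CurvatureBound {X : Type*} [NormedAddCommGroup X] [NormedSpace ℝ X] (C : Set X)
    (f : X → ℝ) (f' : X → X →L[ℝ] ℝ) (σ M : ℝ) : Prop :=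
  ∀ x ∈ C, ∀ s ∈ C, ∀ γ ∈ Ioc (0 : ℝ) 1,
    f (x + γ • (s - x)) ≤ f x + f' x (γ • (s - x)) + γ ^ σ / σ * M

theorem image_one_le_of_deriv_le_add_rpow {g g' : ℝ → ℝ} {a K ν : ℝ} (hν : 0 < 1 + ν)
    (hg : ContinuousOn g (Icc 0 1)) (hg' : ∀ t ∈ Ioo (0 : ℝ) 1, HasDerivAt g (g' t) t)
    (hbound : ∀ t ∈ Ioo (0 : ℝ) 1, g' t ≤ a + K * t ^ ν) :
    g 1 ≤ g 0 + a + K / (1 + ν) := by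
  set ψ : ℝ → ℝ := fun t => a * t + K * t ^ (1 + ν) / (1 + ν) - g t
  have hψ_cont : ContinuousOn ψ (Icc 0 1) := by
    have : Continuous fun t : ℝ => t ^ (1 + ν) := Real.continuous_rpow_const hν.le
    exact ContinuousOn.sub (by fun_prop) hg
  have hψ_deriv : ∀ t ∈ Ioo (0 : ℝ) 1, HasDerivAt ψ (a + K * t ^ ν - g' t) t := by
    intro t ht
    have hpow : HasDerivAt (fun t : ℝ => K * t ^ (1 + ν) / (1 + ν)) (K * t ^ ν) t := by
      refine (((Real.hasDerivAt_rpow_const (p := 1 + ν) (Or.inl ht.1.ne')).const_mul K).div_const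
        (1 + ν)).congr_deriv ?_
      rw [add_sub_cancel_left]
      field_simp
    exact ((((hasDerivAt_id t).const_mul a).add hpow).sub (hg' t ht)).congr_deriv (by simp)
  have hψ_mono : MonotoneOn ψ (Icc 0 1) := by
    refine monotoneOn_of_hasDerivWithinAt_nonneg (convex_Icc 0 1) hψ_cont
      (fun t ht => (hψ_deriv t (by simpa using ht)).hasDerivWithinAt) fun t ht => ?_
    rw [interior_Icc] at ht
    linarith [hbound t ht]
  have := hψ_mono (left_mem_Icc.2 zero_le_one) (right_mem_Icc.2 zero_le_one) zero_le_one
  simp only [ψ, Real.zero_rpow hν.ne', Real.one_rpow, mul_zero, mul_one, zero_div] at this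
  linarith

section

variable {X : Type*} [NormedAddCommGroup X] [NormedSpace ℝ X]

theorem Convex.image_le_add_fderiv_add_rpow {C : Set X} (hC : Convex ℝ C) {f : X → ℝ}
    {f' : X → X →L[ℝ] ℝ} (hf : ∀ x ∈ C, HasFDerivAt f (f' x) x) {ν L : ℝ} (hν : 0 < 1 + ν)
    (hHolder : ∀ x₁ ∈ C, ∀ x₂ ∈ C, ‖f' x₁ - f' x₂‖ ≤ L * ‖x₁ - x₂‖ ^ ν)
    {x y : X} (hx : x ∈ C) (hy : y ∈ C) :
    f y ≤ f x + f' x (y - x) + L / (1 + ν) * ‖y - x‖ ^ (1 + ν) := by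
  set d := y - x
  have hseg : ∀ t ∈ Icc (0 : ℝ) 1, x + t • d ∈ C := fun t ht =>
    hC.add_smul_sub_mem hx hy ht
  have hderiv : ∀ t ∈ Icc (0 : ℝ) 1,
      HasDerivAt (fun t : ℝ => f (x + t • d)) (f' (x + t • d) d) t := fun t ht =>
    (hf _ (hseg t ht)).comp_hasDerivAt t
      (by simpa using ((hasDerivAt_id t).smul_const d).const_add x)
  have hbound : ∀ t ∈ Ioo (0 : ℝ) 1,
      f' (x + t • d) d ≤ f' x d + L * ‖d‖ ^ (1 + ν) * t ^ ν := by
    intro t ht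
    have hholder := hHolder _ (hseg t (Ioo_subset_Icc_self ht)) x hx
    rw [add_sub_cancel_left, norm_smul, Real.norm_of_nonneg ht.1.le,
      Real.mul_rpow ht.1.le (norm_nonneg d)] at hholder
    calc f' (x + t • d) d = f' x d + (f' (x + t • d) - f' x) d := by simp
      _ ≤ f' x d + ‖f' (x + t • d) - f' x‖ * ‖d‖ := by
          gcongr; exact (le_abs_self _).trans ((f' (x + t • d) - f' x).le_opNorm d)
      _ ≤ f' x d + L * (t ^ ν * ‖d‖ ^ ν) * ‖d‖ := by gcongr
      _ = f' x d + L * ‖d‖ ^ (1 + ν) * t ^ ν := by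
          rw [Real.rpow_add' (norm_nonneg d) hν.ne', Real.rpow_one]; ring
  have := image_one_le_of_deriv_le_add_rpow hν
    (fun t ht => (hderiv t ht).continuousAt.continuousWithinAt)
    (fun t ht => hderiv t (Ioo_subset_Icc_self ht)) hbound
  simp only [zero_smul, add_zero, one_smul, d, add_sub_cancel] at this
  rwa [div_mul_eq_mul_div]

theorem curvatureBound_of_holder {C : Set X} (hCbd : Bornology.IsBounded C)
    (hCcv : Convex ℝ C) {f : X → ℝ} {f' : X → X →L[ℝ] ℝ}
    (hf : ∀ x ∈ C, HasFDerivAt f (f' x) x) {ν L : ℝ} (hν : 0 < 1 + ν) (hL : 0 ≤ L)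
    (hHolder : ∀ x₁ ∈ C, ∀ x₂ ∈ C, ‖f' x₁ - f' x₂‖ ≤ L * ‖x₁ - x₂‖ ^ ν) :
    CurvatureBound C f f' (1 + ν) (L * Metric.diam C ^ (1 + ν)) := by
  intro x hx s hs γ hγ
  have hstep : ‖γ • (s - x)‖ ≤ γ * Metric.diam C := by
    rw [norm_smul, Real.norm_of_nonneg hγ.1.le, ← dist_eq_norm]
    exact mul_le_mul_of_nonneg_left (Metric.dist_le_diam_of_mem hCbd hs hx) hγ.1.le
  have := hCcv.image_le_add_fderiv_add_rpow hf hν hHolder hx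
    (hCcv.add_smul_sub_mem hx hs (Ioc_subset_Icc_self hγ))
  rw [add_sub_cancel_left] at this
  calc f (x + γ • (s - x))
      ≤ f x + f' x (γ • (s - x)) + L / (1 + ν) * ‖γ • (s - x)‖ ^ (1 + ν) := this
    _ ≤ f x + f' x (γ • (s - x)) + L / (1 + ν) * (γ * Metric.diam C) ^ (1 + ν) := by
        gcongr
    _ = f x + f' x (γ • (s - x)) + γ ^ (1 + ν) / (1 + ν) * (L * Metric.diam C ^ (1 + ν)) := by
        rw [Real.mul_rpow hγ.1.le Metric.diam_nonneg]; ring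

end

theorem stmt_11_general
    {X : Type*} [NormedAddCommGroup X] [NormedSpace ℝ X]
    (C : Set X)
    (hCbd : Bornology.IsBounded C) (hCcv : Convex ℝ C)
    (f : X → ℝ) (f' : X → X →L[ℝ] ℝ)
    (hfderiv : ∀ x : X, HasFDerivAt f (f' x) x)
    (ν : ℝ) (hν : ν ∈ Set.Ioc (0 : ℝ) 1) (Lν : ℝ) (hLν : 0 < Lν)
    (hHolder : ∀ x₁ ∈ C, ∀ x₂ ∈ C, ‖f' x₁ - f' x₂‖ ≤ Lν * ‖x₁ - x₂‖ ^ ν) :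
    (∀ x ∈ C, ∀ s ∈ C, ∀ γ ∈ Set.Ioc (0 : ℝ) 1,
      f (x + γ • (s - x)) ≤ f x + f' x (γ • (s - x)) +
        γ ^ (1 + ν) / (1 + ν) * (Lν * Metric.diam C ^ (1 + ν)))
    ∧ (∀ L : ℝ, 0 < L →
        (∀ x₁ ∈ C, ∀ x₂ ∈ C, ‖f' x₁ - f' x₂‖ ≤ L * ‖x₁ - x₂‖) →
        ∀ x ∈ C, ∀ s ∈ C, ∀ γ ∈ Set.Ioc (0 : ℝ) 1,
          f (x + γ • (s - x)) ≤ f x + f' x (γ • (s - x)) +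
            γ ^ (2 : ℝ) / 2 * (L * Metric.diam C ^ (2 : ℝ))) := by
  have hf : ∀ x ∈ C, HasFDerivAt f (f' x) x := fun x _ => hfderiv x
  refine ⟨curvatureBound_of_holder hCbd hCcv hf (by linarith [hν.1]) hLν.le hHolder,
    fun L hL hLip => ?_⟩
  have hcurv := curvatureBound_of_holder (ν := 1) hCbd hCcv hf (by norm_num) hL.le
    (by simpa only [Real.rpow_one] using hLip)
  simpa only [CurvatureBound, one_add_one_eq_two] using hcurv

/-- **Curvature constant bound under Hölder continuity of the derivative**
(Corollary 4.6). If `f'` is `ν`-Hölder continuous on `C` with constant `L_ν`, then the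
curvature constant of order `1+ν` of `f` over `C` is at most `L_ν δ^{1+ν}`, where
`δ = diam C`; i.e. `f(x+γ(s−x)) ≤ f(x) + ⟨f'(x), γ(s−x)⟩ + (γ^{1+ν}/(1+ν)) L_ν δ^{1+ν}`
for all `x, s ∈ C`, `γ ∈ (0,1]`. In particular, if `f'` is `L`-Lipschitz on `C`, then
`f(x+γ(s−x)) ≤ f(x) + ⟨f'(x), γ(s−x)⟩ + (γ²/2) L δ²`. -/
theorem stmt_11
    {X : Type*} [NormedAddCommGroup X] [NormedSpace ℝ X] [CompleteSpace X]
    (C : Set X) (hCne : C.Nonempty) (hCcl : IsClosed C)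
    (hCbd : Bornology.IsBounded C) (hCcv : Convex ℝ C)
    (f : X → ℝ) (f' : X → X →L[ℝ] ℝ)
    (hfderiv : ∀ x : X, HasFDerivAt f (f' x) x)
    (ν : ℝ) (hν : ν ∈ Set.Ioc (0 : ℝ) 1) (Lν : ℝ) (hLν : 0 < Lν)
    (hHolder : ∀ x₁ ∈ C, ∀ x₂ ∈ C, ‖f' x₁ - f' x₂‖ ≤ Lν * ‖x₁ - x₂‖ ^ ν) :
    (∀ x ∈ C, ∀ s ∈ C, ∀ γ ∈ Set.Ioc (0 : ℝ) 1,
      f (x + γ • (s - x)) ≤ f x + f' x (γ • (s - x)) +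
        γ ^ (1 + ν) / (1 + ν) * (Lν * Metric.diam C ^ (1 + ν)))
    ∧ (∀ L : ℝ, 0 < L →
        (∀ x₁ ∈ C, ∀ x₂ ∈ C, ‖f' x₁ - f' x₂‖ ≤ L * ‖x₁ - x₂‖) →
        ∀ x ∈ C, ∀ s ∈ C, ∀ γ ∈ Set.Ioc (0 : ℝ) 1,
          f (x + γ • (s - x)) ≤ f x + f' x (γ • (s - x)) +
            γ ^ (2 : ℝ) / 2 * (L * Metric.diam C ^ (2 : ℝ))) :=
  stmt_11_general C hCbd hCcv f f' hfderiv ν hν Lν hLν hHolder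
end

section
/- Suppose the Fréchet derivative f' is uniformly continuous on C, the stepsizes (γ_k) are chosen by line minimization, and for some σ ∈ (1,2] the constant C > 0 is a finite curvature constant of order σ of f over C (i.e., f(x + γ(s−x)) ≤ f(x) + ⟨f'(x), γ(s−x)⟩ + (γ^σ/σ)·C for all x, s ∈ C, γ ∈ (0,1]). Then the sequence (x_k) generated by the Frank–Wolfe algorithm satisfies, for all k ≥ 1, f(x_k) − f* ≤ θ / (1 + (1/σ)·θ^{1/(σ−1)}·C^{1/(1−σ)}·k)^{σ−1}, where θ = f(x_0) − f*; in particular f(x_k) − f* = O(1/k^{σ−1}). -/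
/-!
Write `h k = f (x k) - f*`. Convexity gives `f'(x)(x̄ - x) ≤ f* - f(x)`, so line minimization and
the curvature bound yield `h (k+1) ≤ (1 - γ) h k + γ^σ C / σ` for every `γ ∈ (0,1]`. Choosing
`γ = min(1, (h k / C)^{1/(σ-1)})` and applying Bernoulli's inequality
`(1 - u)^{-β} ≥ 1 + β u` shows that `h k ^ {-1/(σ-1)}` grows by at least `C^{-1/(σ-1)} / σ`
per step, which sums to the bound.
-/

open Filter Topology Set

theorem ConvexOn.le_sub_of_hasFDerivAt_s12 {X : Type*} [NormedAddCommGroup X] [NormedSpace ℝ X]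
    {f : X → ℝ} {f' : X →L[ℝ] ℝ} {x : X} (hf : ConvexOn ℝ univ f) (hfx : HasFDerivAt f f' x)
    (y : X) : f' (y - x) ≤ f y - f x := by
  have hline : HasDerivAt (AffineMap.lineMap x y : ℝ → X) (y - x) 0 := by
    simpa using AffineMap.hasDerivAt_lineMap (a := x) (b := y) (x := 0)
  have hg := (hf.comp_affineMap (AffineMap.lineMap x y)).le_slope_of_hasDerivAt
    (mem_univ 0) (mem_univ 1) zero_lt_one
    ((by simpa using hfx : HasFDerivAt f f' (AffineMap.lineMap x y (0:ℝ))).comp_hasDerivAt 0 hline)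
  simpa [slope_def_field] using hg

theorem FrankWolfe.gap_next_le {X : Type*} [NormedAddCommGroup X] [NormedSpace ℝ X]
    {f : X → ℝ} {f' : X →L[ℝ] ℝ} {x s x' xstar : X} {σ Cf : ℝ}
    (hf : ConvexOn ℝ univ f) (hfx : HasFDerivAt f f' x) (hs : f' s ≤ f' xstar)
    (hcurv : ∀ g ∈ Ioc (0 : ℝ) 1,
      f (x + g • (s - x)) ≤ f x + f' (g • (s - x)) + g ^ σ / σ * Cf)
    (hx' : ∀ g ∈ Ioc (0 : ℝ) 1, f x' ≤ f (x + g • (s - x))) (g : ℝ) (hg : g ∈ Ioc (0 : ℝ) 1) :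
    f x' - f xstar ≤ (f x - f xstar) - g * (f x - f xstar) + g ^ σ / σ * Cf := by
  have hgap : f' (s - x) ≤ f xstar - f x := by
    have := hf.le_sub_of_hasFDerivAt_s12 hfx xstar
    rw [map_sub] at this ⊢
    linarith
  have hlin : f' (g • (s - x)) ≤ g * (f xstar - f x) := by
    rw [map_smul, smul_eq_mul]
    exact mul_le_mul_of_nonneg_left hgap hg.1.le
  linarith [hx' g hg, hcurv g hg]

theorem one_add_mul_le_rpow_one_sub_neg {u β : ℝ} (hu : u < 1) (hβ : 0 ≤ β) :
    1 + β * u ≤ (1 - u) ^ (-β) := by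
  have hpos : 0 < 1 - u := by linarith
  have hlog : Real.log (1 - u) ≤ -u := by linarith [Real.log_le_sub_one_of_pos hpos]
  rw [Real.rpow_def_of_pos hpos]
  nlinarith [Real.add_one_le_exp (Real.log (1 - u) * -β)]

theorem one_div_one_sub_eq_neg {σ : ℝ} : 1 / (1 - σ) = -(1 / (σ - 1)) := by
  rw [← div_neg, neg_sub]

theorem rpow_mul_one_add_le_of_le_mul_one_sub {σ T g θ : ℝ} (hσ : 1 < σ) (hT : 0 < T)
    (hθ : 0 < θ) (hle : θ ≤ T * (1 - (σ - 1) / σ * g)) :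
    T ^ (1 / (1 - σ)) * (1 + g / σ) ≤ θ ^ (1 / (1 - σ)) := by
  have hσ0 : 0 < σ := by linarith
  have hlt : (σ - 1) / σ * g < 1 := by
    have : (σ - 1) / σ < 1 := by rw [div_lt_one hσ0]; linarith
    have : 0 < (σ - 1) / σ := div_pos (by linarith) hσ0
    nlinarith
  have he : 1 / (1 - σ) ≤ 0 := div_nonpos_of_nonneg_of_nonpos zero_le_one (by linarith)
  have hbern : 1 + g / σ ≤ (1 - (σ - 1) / σ * g) ^ (1 / (1 - σ)) := by
    rw [one_div_one_sub_eq_neg]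
    convert one_add_mul_le_rpow_one_sub_neg hlt (one_div_nonneg.2 (by linarith : 0 ≤ σ - 1))
      using 1
    field_simp [(by linarith : σ - 1 ≠ 0)]
  calc T ^ (1 / (1 - σ)) * (1 + g / σ)
      ≤ T ^ (1 / (1 - σ)) * (1 - (σ - 1) / σ * g) ^ (1 / (1 - σ)) := by gcongr
    _ = (T * (1 - (σ - 1) / σ * g)) ^ (1 / (1 - σ)) := (Real.mul_rpow hT.le (by linarith)).symm
    _ ≤ θ ^ (1 / (1 - σ)) := Real.rpow_le_rpow_of_nonpos hθ hle he

theorem rpow_add_le_rpow_of_forall_le {σ Cf θ θ' : ℝ} (hσ : 1 < σ) (hCf : 0 < Cf)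
    (hθ' : 0 < θ') (hθ'θ : θ' ≤ θ)
    (H : ∀ g ∈ Ioc (0 : ℝ) 1, θ' ≤ θ - g * θ + g ^ σ / σ * Cf) :
    θ ^ (1 / (1 - σ)) + 1 / σ * Cf ^ (1 / (1 - σ)) ≤ θ' ^ (1 / (1 - σ)) := by
  have hσ0 : 0 < σ := by linarith
  have he : 1 / (1 - σ) ≤ 0 := div_nonpos_of_nonneg_of_nonpos zero_le_one (by linarith)
  have hθ : 0 < θ := hθ'.trans_le hθ'θ
  rcases le_or_gt Cf θ with hCfθ | hθCf
  · have h1 : θ' ≤ Cf * (1 - (σ - 1) / σ * 1) :=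
      calc θ' ≤ θ - 1 * θ + 1 ^ σ / σ * Cf := H 1 ⟨one_pos, le_rfl⟩
        _ = Cf * (1 - (σ - 1) / σ * 1) := by rw [Real.one_rpow]; field_simp; ring
    have := rpow_mul_one_add_le_of_le_mul_one_sub hσ hCf hθ' h1
    have := Real.rpow_le_rpow_of_nonpos hCf hCfθ he
    linarith
  · -- `g` minimises `- g θ + g ^ σ Cf / σ` over `g > 0`
    set g := (θ / Cf) ^ (1 / (σ - 1)) with hg
    have hdiv : 0 < θ / Cf := div_pos hθ hCf
    have hg0 : 0 < g := Real.rpow_pos_of_pos hdiv _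
    have hg1 : g ≤ 1 := Real.rpow_le_one hdiv.le ((div_le_one hCf).2 hθCf.le)
      (one_div_nonneg.2 (by linarith))
    have hgσ : g ^ σ * Cf = g * θ := by
      rw [← Real.rpow_mul hdiv.le, show 1 / (σ - 1) * σ = 1 / (σ - 1) + 1 by
        field_simp [(by linarith : σ - 1 ≠ 0)]; ring, Real.rpow_add hdiv, Real.rpow_one, ← hg]
      field_simp
    have h1 : θ' ≤ θ * (1 - (σ - 1) / σ * g) :=
      calc θ' ≤ θ - g * θ + g ^ σ / σ * Cf := H g ⟨hg0, hg1⟩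
        _ = θ * (1 - (σ - 1) / σ * g) := by rw [div_mul_eq_mul_div, hgσ]; field_simp; ring
    have hθg : θ ^ (1 / (1 - σ)) * g = Cf ^ (1 / (1 - σ)) := by
      rw [hg, Real.div_rpow hθ.le hCf.le, one_div_one_sub_eq_neg, Real.rpow_neg hθ.le,
        Real.rpow_neg hCf.le]
      field_simp
    calc θ ^ (1 / (1 - σ)) + 1 / σ * Cf ^ (1 / (1 - σ))
        = θ ^ (1 / (1 - σ)) * (1 + g / σ) := by rw [← hθg]; ring
      _ ≤ θ' ^ (1 / (1 - σ)) := rpow_mul_one_add_le_of_le_mul_one_sub hσ hθ hθ' h1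

theorem le_div_one_add_rpow_of_rpow_add_le {σ θ₀ θ c : ℝ} (hσ : 1 < σ) (hθ₀ : 0 < θ₀)
    (hθ : 0 < θ) (hc : 0 ≤ c) (h : θ₀ ^ (1 / (1 - σ)) + c ≤ θ ^ (1 / (1 - σ))) :
    θ ≤ θ₀ / (1 + θ₀ ^ (1 / (σ - 1)) * c) ^ (σ - 1) := by
  have hinv : ∀ t : ℝ, 0 < t → (t ^ (1 / (1 - σ))) ^ (1 - σ) = t := fun t ht => by
    rw [← Real.rpow_mul ht.le, one_div_mul_cancel (by linarith), Real.rpow_one]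
  have hsplit : θ₀ ^ (1 / (1 - σ)) + c = θ₀ ^ (1 / (1 - σ)) * (1 + θ₀ ^ (1 / (σ - 1)) * c) := by
    rw [mul_add, mul_one, ← mul_assoc, ← Real.rpow_add hθ₀, one_div_one_sub_eq_neg,
      neg_add_cancel, Real.rpow_zero, one_mul]
  have hbase : 0 < 1 + θ₀ ^ (1 / (σ - 1)) * c := by positivity
  calc θ = (θ ^ (1 / (1 - σ))) ^ (1 - σ) := (hinv θ hθ).symm
    _ ≤ (θ₀ ^ (1 / (1 - σ)) + c) ^ (1 - σ) :=
      Real.rpow_le_rpow_of_nonpos (by positivity) h (by linarith)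
    _ = θ₀ / (1 + θ₀ ^ (1 / (σ - 1)) * c) ^ (σ - 1) := by
      rw [hsplit, Real.mul_rpow (by positivity) hbase.le, hinv θ₀ hθ₀,
        show 1 - σ = -(σ - 1) by ring, Real.rpow_neg hbase.le, ← div_eq_mul_inv]

theorem le_div_one_add_rpow_of_forall_le {σ Cf : ℝ} {h : ℕ → ℝ} (hσ : 1 < σ) (hCf : 0 < Cf)
    (hnonneg : ∀ k, 0 ≤ h k) (hanti : Antitone h)
    (hstep : ∀ k, ∀ g ∈ Ioc (0 : ℝ) 1, h (k + 1) ≤ h k - g * h k + g ^ σ / σ * Cf) (k : ℕ) :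
    h k ≤ h 0 / (1 + 1 / σ * h 0 ^ (1 / (σ - 1)) * Cf ^ (1 / (1 - σ)) * k) ^ (σ - 1) := by
  rcases (hnonneg k).eq_or_lt with hk | hk
  · have hσ0 : 0 < σ := by linarith
    have h0 := hnonneg 0
    rw [← hk]; positivity
  have hpos : ∀ j ≤ k, 0 < h j := fun j hj => hk.trans_le (hanti hj)
  have hsum : ∀ j ≤ k, h 0 ^ (1 / (1 - σ)) + j * (1 / σ * Cf ^ (1 / (1 - σ)))
      ≤ h j ^ (1 / (1 - σ)) := by
    intro j
    induction j with
    | zero => simp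
    | succ j ih =>
      intro hj
      have := rpow_add_le_rpow_of_forall_le hσ hCf (hpos _ hj) (hanti j.le_succ) (hstep j)
      push_cast
      linarith [ih (j.le_succ.trans hj)]
  calc h k ≤ h 0 / (1 + h 0 ^ (1 / (σ - 1)) * (k * (1 / σ * Cf ^ (1 / (1 - σ))))) ^ (σ - 1) :=
        le_div_one_add_rpow_of_rpow_add_le hσ (hpos 0 k.zero_le) hk (by positivity) (hsum k le_rfl)
    _ = _ := by ring_nf

theorem stmt_12_general
    {X : Type*} [NormedAddCommGroup X] [NormedSpace ℝ X]
    (C : Set X) (hCcv : Convex ℝ C)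
    (f : X → ℝ) (f' : X → X →L[ℝ] ℝ)
    (hfconv : ConvexOn ℝ Set.univ f)
    (hfderiv : ∀ x : X, HasFDerivAt f (f' x) x)
    (σ : ℝ) (hσ : σ ∈ Set.Ioc (1 : ℝ) 2)
    (Cf : ℝ) (hCf : 0 < Cf)
    (hcurv : ∀ x ∈ C, ∀ s ∈ C, ∀ γ ∈ Set.Ioc (0 : ℝ) 1,
      f (x + γ • (s - x)) ≤ f x + f' x (γ • (s - x)) + γ ^ σ / σ * Cf)
    (xstar : X) (hxstarC : xstar ∈ C) (hxstarmin : ∀ y ∈ C, f xstar ≤ f y)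
    (x xbar : ℕ → X) (γ : ℕ → ℝ)
    (hx0 : x 0 ∈ C)
    (hxbarC : ∀ k, xbar k ∈ C)
    (hxbarmin : ∀ k, ∀ y ∈ C, f' (x k) (xbar k) ≤ f' (x k) y)
    (hγ : ∀ k, γ k ∈ Set.Icc (0 : ℝ) 1)
    (hupdate : ∀ k, x (k + 1) = x k + γ k • (xbar k - x k))
    (hlinemin : ∀ k, ∀ γ' ∈ Set.Icc (0 : ℝ) 1,
      f (x k + γ k • (xbar k - x k)) ≤ f (x k + γ' • (xbar k - x k))) :
    ∀ k : ℕ, 1 ≤ k →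
      f (x k) - f xstar ≤
        (f (x 0) - f xstar) /
          (1 + 1 / σ * (f (x 0) - f xstar) ^ (1 / (σ - 1)) * Cf ^ (1 / (1 - σ)) * k)
            ^ (σ - 1) := by
  have hxC : ∀ k, x k ∈ C := by
    intro k
    induction k with
    | zero => exact hx0
    | succ k ih => rw [hupdate k]; exact hCcv.add_smul_sub_mem ih (hxbarC k) (hγ k)
  have hanti : Antitone fun k => f (x k) - f xstar := by
    refine antitone_nat_of_succ_le fun k => ?_
    simpa [hupdate k] using hlinemin k 0 ⟨le_rfl, zero_le_one⟩
  have hstep : ∀ k, ∀ g ∈ Ioc (0 : ℝ) 1, f (x (k + 1)) - f xstar ≤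
      (f (x k) - f xstar) - g * (f (x k) - f xstar) + g ^ σ / σ * Cf := fun k =>
    FrankWolfe.gap_next_le hfconv (hfderiv (x k)) (hxbarmin k xstar hxstarC)
      (hcurv (x k) (hxC k) (xbar k) (hxbarC k))
      (fun g hg => hupdate k ▸ hlinemin k g ⟨hg.1.le, hg.2⟩)
  exact fun k _ => le_div_one_add_rpow_of_forall_le hσ.1 hCf
    (fun k => sub_nonneg.2 (hxstarmin _ (hxC k))) hanti hstep k

/-- **Rate of convergence of the Frank–Wolfe algorithm with line minimization**
(Theorem 4.8). If `f'` is uniformly continuous on `C`, `Cf > 0` is a curvature constant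
of order `σ ∈ (1,2]` of `f` over `C`, and the stepsizes are chosen by line minimization,
then for all `k ≥ 1`,
`f(x_k) − f* ≤ θ / (1 + (1/σ) θ^{1/(σ−1)} Cf^{1/(1−σ)} k)^{σ−1}`, where
`θ = f(x_0) − f*`; in particular `f(x_k) − f* = O(1/k^{σ−1})`. -/
theorem stmt_12
    {X : Type*} [NormedAddCommGroup X] [NormedSpace ℝ X] [CompleteSpace X]
    (C : Set X) (hCne : C.Nonempty) (hCcl : IsClosed C)
    (hCbd : Bornology.IsBounded C) (hCcv : Convex ℝ C)
    (f : X → ℝ) (f' : X → X →L[ℝ] ℝ)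
    (hfconv : ConvexOn ℝ Set.univ f)
    (hfderiv : ∀ x : X, HasFDerivAt f (f' x) x)
    (hfUC : UniformContinuousOn f' C)
    (σ : ℝ) (hσ : σ ∈ Set.Ioc (1 : ℝ) 2)
    (Cf : ℝ) (hCf : 0 < Cf)
    (hcurv : ∀ x ∈ C, ∀ s ∈ C, ∀ γ ∈ Set.Ioc (0 : ℝ) 1,
      f (x + γ • (s - x)) ≤ f x + f' x (γ • (s - x)) + γ ^ σ / σ * Cf)
    (xstar : X) (hxstarC : xstar ∈ C) (hxstarmin : ∀ y ∈ C, f xstar ≤ f y)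
    (x xbar : ℕ → X) (γ : ℕ → ℝ)
    (hx0 : x 0 ∈ C)
    (hxbarC : ∀ k, xbar k ∈ C)
    (hxbarmin : ∀ k, ∀ y ∈ C, f' (x k) (xbar k) ≤ f' (x k) y)
    (hγ : ∀ k, γ k ∈ Set.Icc (0 : ℝ) 1)
    (hupdate : ∀ k, x (k + 1) = x k + γ k • (xbar k - x k))
    (hlinemin : ∀ k, ∀ γ' ∈ Set.Icc (0 : ℝ) 1,
      f (x k + γ k • (xbar k - x k)) ≤ f (x k + γ' • (xbar k - x k))) :
    ∀ k : ℕ, 1 ≤ k →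
      f (x k) - f xstar ≤
        (f (x 0) - f xstar) /
          (1 + 1 / σ * (f (x 0) - f xstar) ^ (1 / (σ - 1)) * Cf ^ (1 / (1 - σ)) * k)
            ^ (σ - 1) :=
  stmt_12_general C hCcv f f' hfconv hfderiv σ hσ Cf hCf hcurv xstar hxstarC hxstarmin x xbar γ hx0
    hxbarC hxbarmin hγ hupdate hlinemin
end

section
/- Suppose the Fréchet derivative f' is uniformly continuous on C and the stepsizes (γ_k) are chosen by line minimization for the composite objective φ = f + g, i.e., φ(x_k + γ_k(x̄_k − x_k)) ≤ φ(x_k + γ(x̄_k − x_k)) for all γ ∈ [0,1]. Then the sequence (x_k) generated by the generalized Frank–Wolfe algorithm satisfies: (i) φ(x_{k+1}) ≤ φ(x_k) for all k ≥ 0, and (ii) φ(x_k) → φ* := inf_{x ∈ C} φ(x) as k → ∞. -/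
/-!
Comparing `x_{k+1}`, the minimizer of `φ` on the segment `[x_k, x̄_k]`, with `x_k` gives
monotonicity; comparing it with `x_k + t (x̄_k - x_k)` and using convexity of `f` and `g` gives
`φ(x_{k+1}) ≤ φ(x_k) - t gap_k + t ‖f'(x_k + t (x̄_k - x_k)) - f'(x_k)‖ ‖x̄_k - x_k‖`, where the
Frank–Wolfe gap `gap_k = ⟨f'(x_k), x_k - x̄_k⟩ + g(x_k) - g(x̄_k)` dominates `φ(x_k) - φ*`.
As `C` is bounded and `f'` is uniformly continuous on `C`, for every `h > 0` a single `t > 0`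
makes the error term at most `t h / 2` at every iterate, so while `φ(x_k) - φ* ≥ h` the values
drop by `t h / 2` per step. Since they are bounded below by `φ*`, they converge to `φ*`.
-/
open Filter Topology Set

section

variable {X : Type*} [NormedAddCommGroup X] [NormedSpace ℝ X]

theorem ConvexOn.apply_sub_le_of_hasFDerivAt_s15 {s : Set X} {f : X → ℝ} {f' : X →L[ℝ] ℝ} {x y : X}
    (hf : ConvexOn ℝ s f) (hx : x ∈ s) (hy : y ∈ s) (hf' : HasFDerivAt f f' x) :
    f' (y - x) ≤ f y - f x := by
  have hline : HasDerivAt (f ∘ AffineMap.lineMap x y) (f' (y - x)) (0 : ℝ) :=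
    hf'.comp_hasDerivAt_of_eq (0 : ℝ) AffineMap.hasDerivAt_lineMap (by simp)
  simpa [slope] using (hf.comp_affineMap (AffineMap.lineMap x y)).le_slope_of_hasDerivAt
    (x := 0) (y := 1) (by simpa) (by simpa) one_pos hline

theorem ConvexOn.apply_add_smul_sub_le_s15 {s : Set X} {f : X → ℝ} {f' : X → X →L[ℝ] ℝ}
    {x y : X} {t : ℝ} (hf : ConvexOn ℝ s f) (hx : x ∈ s) (hy : y ∈ s) (ht : t ∈ Icc (0 : ℝ) 1)
    (hf' : HasFDerivAt f (f' (x + t • (y - x))) (x + t • (y - x))) :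
    f (x + t • (y - x)) ≤
      f x + t * f' x (y - x) + t * (‖f' (x + t • (y - x)) - f' x‖ * ‖y - x‖) := by
  set p := x + t • (y - x)
  have hgrad := hf.apply_sub_le_of_hasFDerivAt_s15 (hf.1.add_smul_sub_mem hx hy ht) hx hf'
  have hxp : x - p = -(t • (y - x)) := by simp [p]
  have hdiff : f' p (y - x) - f' x (y - x) ≤ ‖f' p - f' x‖ * ‖y - x‖ :=
    (le_abs_self _).trans ((f' p - f' x).le_opNorm (y - x))
  rw [hxp, map_neg, map_smul, smul_eq_mul] at hgrad
  nlinarith [ht.1]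

def frankWolfeGap (f' : X → X →L[ℝ] ℝ) (g : X → ℝ) (x y : X) : ℝ :=
  f' x (x - y) + g x - g y

variable {C : Set X} {f g : X → ℝ} {f' : X → X →L[ℝ] ℝ}

theorem sub_le_frankWolfeGap {x y z : X} (hf : ConvexOn ℝ C f) (hf' : HasFDerivAt f (f' x) x)
    (hx : x ∈ C) (hz : z ∈ C) (hy : f' x y + g y ≤ f' x z + g z) :
    f x + g x - (f z + g z) ≤ frankWolfeGap f' g x y := by
  have hgrad := hf.apply_sub_le_of_hasFDerivAt_s15 hx hz hf'
  simp only [frankWolfeGap, map_sub] at hgrad ⊢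
  linarith

theorem add_smul_sub_le_sub_frankWolfeGap {x y : X} {t : ℝ} (hf : ConvexOn ℝ C f)
    (hg : ConvexOn ℝ C g) (hf' : ∀ z ∈ C, HasFDerivAt f (f' z) z) (hx : x ∈ C) (hy : y ∈ C)
    (ht : t ∈ Icc (0 : ℝ) 1) :
    f (x + t • (y - x)) + g (x + t • (y - x)) ≤
      f x + g x - t * frankWolfeGap f' g x y +
        t * (‖f' (x + t • (y - x)) - f' x‖ * ‖y - x‖) := by
  have hfp := hf.apply_add_smul_sub_le_s15 hx hy ht (hf' _ (hf.1.add_smul_sub_mem hx hy ht))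
  have hgp : g (x + t • (y - x)) ≤ (1 - t) * g x + t * g y := by
    have hcomb : x + t • (y - x) = (1 - t) • x + t • y := by module
    simpa [hcomb] using hg.2 hx hy (sub_nonneg.2 ht.2) ht.1 (by ring)
  simp only [frankWolfeGap, map_sub] at hfp ⊢
  nlinarith

end

theorem UniformContinuousOn.exists_forall_norm_sub_mul_le {X F : Type*}
    [SeminormedAddCommGroup X] [NormedSpace ℝ X] [SeminormedAddCommGroup F]
    {C : Set X} {u : X → F} (hu : UniformContinuousOn u C) (hCbd : Bornology.IsBounded C)
    (hC : Convex ℝ C) {ε : ℝ} (hε : 0 < ε) :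
    ∃ t ∈ Ioc (0 : ℝ) 1, ∀ x ∈ C, ∀ y ∈ C, ‖u (x + t • (y - x)) - u x‖ * ‖y - x‖ ≤ ε := by
  obtain ⟨D, hD⟩ := Metric.isBounded_iff.1 hCbd
  have hD1 : 0 < |D| + 1 := by positivity
  obtain ⟨δ, hδ, hu⟩ := Metric.uniformContinuousOn_iff.1 hu (ε / (|D| + 1)) (by positivity)
  refine ⟨min 1 (δ / (2 * (|D| + 1))), ⟨by positivity, min_le_left _ _⟩, fun x hx y hy => ?_⟩
  set t := min 1 (δ / (2 * (|D| + 1)))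
  have hyx : ‖y - x‖ ≤ |D| + 1 := by
    rw [← dist_eq_norm]; linarith [hD hy hx, le_abs_self D]
  have hdist : dist (x + t • (y - x)) x < δ := by
    have ht : t * (|D| + 1) ≤ δ / 2 := by
      calc t * (|D| + 1) ≤ δ / (2 * (|D| + 1)) * (|D| + 1) := by gcongr; exact min_le_right _ _
        _ = δ / 2 := by field_simp
    rw [dist_eq_norm, add_sub_cancel_left, norm_smul, Real.norm_of_nonneg (by positivity)]
    nlinarith [norm_nonneg (y - x)]
  have hclose := hu _ (hC.add_smul_sub_mem hx hy ⟨by positivity, min_le_left _ _⟩) x hx hdist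
  rw [dist_eq_norm] at hclose
  calc ‖u (x + t • (y - x)) - u x‖ * ‖y - x‖ ≤ ε / (|D| + 1) * (|D| + 1) := by gcongr
    _ = ε := by field_simp

theorem tendsto_of_antitone_of_sufficient_decrease {a : ℕ → ℝ} {A : ℝ} (ha : Antitone a)
    (hA : ∀ k, A ≤ a k) (hdec : ∀ h > 0, ∃ c > 0, ∀ k, h ≤ a k - A → a (k + 1) ≤ a k - c) :
    Tendsto a atTop (𝓝 A) := by
  have hL := tendsto_atTop_ciInf ha ⟨A, by rintro _ ⟨k, rfl⟩; exact hA k⟩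
  set L := ⨅ k, a k
  suffices hLA : L ≤ A by rwa [le_antisymm hLA (ge_of_tendsto' hL hA)] at hL
  by_contra! hAL
  obtain ⟨c, hc, hstep⟩ := hdec (L - A) (sub_pos.2 hAL)
  have hiter : ∀ k : ℕ, a k ≤ a 0 - k * c := by
    intro k
    induction k with
    | zero => simp
    | succ k ih =>
      have := hstep k (by linarith [ha.le_of_tendsto hL k])
      push_cast
      linarith
  obtain ⟨k, hk⟩ := exists_nat_gt ((a 0 - A) / c)
  rw [div_lt_iff₀ hc] at hk
  linarith [hA k, hiter k]

theorem tendsto_frankWolfe_of_lineMin {X : Type*} [NormedAddCommGroup X] [NormedSpace ℝ X]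
    {C : Set X} {f g : X → ℝ} {f' : X → X →L[ℝ] ℝ} {z : X} {x xbar : ℕ → X}
    (hCbd : Bornology.IsBounded C) (hf : ConvexOn ℝ C f) (hg : ConvexOn ℝ C g)
    (hf' : ∀ y ∈ C, HasFDerivAt f (f' y) y) (hf'uc : UniformContinuousOn f' C)
    (hzC : z ∈ C) (hzmin : ∀ y ∈ C, f z + g z ≤ f y + g y)
    (hxC : ∀ k, x k ∈ C) (hxbarC : ∀ k, xbar k ∈ C)
    (hxbarmin : ∀ k, ∀ y ∈ C, f' (x k) (xbar k) + g (xbar k) ≤ f' (x k) y + g y)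
    (hlinemin : ∀ k, ∀ t ∈ Icc (0 : ℝ) 1, f (x (k + 1)) + g (x (k + 1)) ≤
      f (x k + t • (xbar k - x k)) + g (x k + t • (xbar k - x k))) :
    Tendsto (fun k => f (x k) + g (x k)) atTop (𝓝 (f z + g z)) := by
  have hdescent (k : ℕ) : f (x (k + 1)) + g (x (k + 1)) ≤ f (x k) + g (x k) := by
    simpa using hlinemin k 0 ⟨le_rfl, zero_le_one⟩
  refine tendsto_of_antitone_of_sufficient_decrease (antitone_nat_of_succ_le hdescent)
    (fun k => hzmin _ (hxC k)) fun h hh => ?_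
  obtain ⟨t, ⟨ht0, ht1⟩, ht⟩ :=
    hf'uc.exists_forall_norm_sub_mul_le hCbd hf.1 (half_pos hh)
  refine ⟨t * (h / 2), by positivity, fun k hk => ?_⟩
  have hgap : h ≤ frankWolfeGap f' g (x k) (xbar k) :=
    hk.trans (sub_le_frankWolfeGap hf (hf' _ (hxC k)) (hxC k) hzC (hxbarmin k z hzC))
  calc f (x (k + 1)) + g (x (k + 1))
      ≤ f (x k + t • (xbar k - x k)) + g (x k + t • (xbar k - x k)) :=
        hlinemin k t ⟨ht0.le, ht1⟩
    _ ≤ f (x k) + g (x k) - t * frankWolfeGap f' g (x k) (xbar k) +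
          t * (‖f' (x k + t • (xbar k - x k)) - f' (x k)‖ * ‖xbar k - x k‖) :=
        add_smul_sub_le_sub_frankWolfeGap hf hg hf' (hxC k) (hxbarC k) ⟨ht0.le, ht1⟩
    _ ≤ f (x k) + g (x k) - t * h + t * (h / 2) := by
        gcongr
        exact ht _ (hxC k) _ (hxbarC k)
    _ = f (x k) + g (x k) - t * (h / 2) := by ring

theorem EReal.coe_add_eq_coe_add_toReal (a : ℝ) {b : EReal} (hb_top : b ≠ ⊤) (hb_bot : b ≠ ⊥) :
    (a : EReal) + b = ((a + b.toReal : ℝ) : EReal) := by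
  rw [EReal.coe_add, EReal.coe_toReal hb_top hb_bot]

theorem convexOn_toReal_of_forall_lt_one {X : Type*} [AddCommGroup X] [Module ℝ X] {s : Set X}
    {g : X → EReal} (hs : Convex ℝ s) (hg_top : ∀ z ∈ s, g z ≠ ⊤) (hg_bot : ∀ z ∈ s, g z ≠ ⊥)
    (hg : ∀ z ∈ s, ∀ w ∈ s, ∀ lam : ℝ, 0 < lam → lam < 1 →
      g (lam • z + (1 - lam) • w) ≤ (lam : EReal) * g z + ((1 - lam : ℝ) : EReal) * g w) :
    ConvexOn ℝ s fun z => (g z).toReal := by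
  refine convexOn_iff_forall_pos.2 ⟨hs, fun z hz w hw a b ha hb hab => ?_⟩
  obtain rfl : b = 1 - a := by linarith
  have hcomb := hg z hz w hw a ha (by linarith)
  rw [← EReal.coe_toReal (hg_top _ hz) (hg_bot _ hz), ← EReal.coe_toReal (hg_top _ hw) (hg_bot _ hw),
    ← EReal.coe_toReal (hg_top _ (hs hz hw ha.le hb.le hab)) (hg_bot _ (hs hz hw ha.le hb.le hab)),
    ← EReal.coe_mul, ← EReal.coe_mul, ← EReal.coe_add, EReal.coe_le_coe_iff] at hcomb
  simpa only [smul_eq_mul] using hcomb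

theorem stmt_15_general
    {X : Type*} [NormedAddCommGroup X] [NormedSpace ℝ X]
    (C : Set X)
    (hCbd : Bornology.IsBounded C) (hCcv : Convex ℝ C)
    (f : X → ℝ) (f' : X → X →L[ℝ] ℝ)
    (hfconv : ConvexOn ℝ Set.univ f)
    (hfderiv : ∀ x : X, HasFDerivAt f (f' x) x)
    (hfUC : UniformContinuousOn f' C)
    (g : X → EReal)
    (hgnebot : ∀ z : X, g z ≠ ⊥)
    (hgconv : ∀ z w : X, ∀ lam : ℝ, 0 < lam → lam < 1 →
      g (lam • z + (1 - lam) • w) ≤ (lam : EReal) * g z + ((1 - lam : ℝ) : EReal) * g w)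
    (hgC : ∀ z ∈ C, g z ≠ ⊤)
    (xstar : X) (hxstarC : xstar ∈ C)
    (hxstarmin : ∀ y ∈ C, (f xstar : EReal) + g xstar ≤ (f y : EReal) + g y)
    (x xbar : ℕ → X) (γ : ℕ → ℝ)
    (hx0 : x 0 ∈ C)
    (hxbarC : ∀ k, xbar k ∈ C)
    (hxbarmin : ∀ k, ∀ y ∈ C,
      (f' (x k) (xbar k) : EReal) + g (xbar k) ≤ (f' (x k) y : EReal) + g y)
    (hγ : ∀ k, γ k ∈ Set.Icc (0 : ℝ) 1)
    (hupdate : ∀ k, x (k + 1) = x k + γ k • (xbar k - x k))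
    (hlinemin : ∀ k, ∀ γ' ∈ Set.Icc (0 : ℝ) 1,
      (f (x k + γ k • (xbar k - x k)) : EReal) + g (x k + γ k • (xbar k - x k)) ≤
        (f (x k + γ' • (xbar k - x k)) : EReal) + g (x k + γ' • (xbar k - x k))) :
    (∀ k, (f (x (k + 1)) : EReal) + g (x (k + 1)) ≤ (f (x k) : EReal) + g (x k)) ∧
      Tendsto (fun k => (f (x k) : EReal) + g (x k)) atTop
        (𝓝 ((f xstar : EReal) + g xstar)) := by
  have hxC (k : ℕ) : x k ∈ C := by
    induction k with
    | zero => exact hx0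
    | succ k ih => simpa [hupdate] using hCcv.add_smul_sub_mem ih (hxbarC k) (hγ k)
  have hsegC (k : ℕ) {t : ℝ} (ht : t ∈ Icc (0 : ℝ) 1) : x k + t • (xbar k - x k) ∈ C :=
    hCcv.add_smul_sub_mem (hxC k) (hxbarC k) ht
  set G : X → ℝ := fun z => (g z).toReal
  have hcoe (a : ℝ) {z : X} (hz : z ∈ C) : (a : EReal) + g z = ((a + G z : ℝ) : EReal) :=
    EReal.coe_add_eq_coe_add_toReal a (hgC z hz) (hgnebot z)
  have hG : ConvexOn ℝ C G := convexOn_toReal_of_forall_lt_one hCcv hgC (fun z _ => hgnebot z)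
    fun z _ w _ => hgconv z w
  have hcoe_le (a b : ℝ) {z w : X} (hz : z ∈ C) (hw : w ∈ C) :
      (a : EReal) + g z ≤ (b : EReal) + g w ↔ a + G z ≤ b + G w := by
    rw [hcoe a hz, hcoe b hw, EReal.coe_le_coe_iff]
  have hlim := tendsto_frankWolfe_of_lineMin hCbd (hfconv.subset (subset_univ C) hCcv) hG
    (fun y _ => hfderiv y) hfUC hxstarC (fun y hy => (hcoe_le _ _ hxstarC hy).1 (hxstarmin y hy))
    hxC hxbarC (fun k y hy => (hcoe_le _ _ (hxbarC k) hy).1 (hxbarmin k y hy))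
    fun k t ht => (hcoe_le _ _ (hxC (k + 1)) (hsegC k ht)).1 (hupdate k ▸ hlinemin k t ht)
  refine ⟨fun k => by simpa [hupdate] using hlinemin k 0 ⟨le_rfl, zero_le_one⟩, ?_⟩
  rw [hcoe _ hxstarC]
  exact (EReal.tendsto_coe.2 hlim).congr fun k => (hcoe _ (hxC k)).symm

/-- **Convergence of the generalized Frank–Wolfe algorithm with line minimization**
(Theorem 5.1). For the composite objective `φ = f + g`, with `f'` uniformly continuous
on `C`, `g` proper lsc convex and finite on `C`, and stepsizes chosen by line
minimization for `φ`, the generalized Frank–Wolfe iterates satisfy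
`φ(x_{k+1}) ≤ φ(x_k)` and `φ(x_k) → φ* = inf_C φ`. -/
theorem stmt_15
    {X : Type*} [NormedAddCommGroup X] [NormedSpace ℝ X] [CompleteSpace X]
    (C : Set X) (hCne : C.Nonempty) (hCcl : IsClosed C)
    (hCbd : Bornology.IsBounded C) (hCcv : Convex ℝ C)
    (f : X → ℝ) (f' : X → X →L[ℝ] ℝ)
    (hfconv : ConvexOn ℝ Set.univ f)
    (hfderiv : ∀ x : X, HasFDerivAt f (f' x) x)
    (hfUC : UniformContinuousOn f' C)
    (g : X → EReal)
    (hgproper : ∃ z : X, g z ≠ ⊤) (hgnebot : ∀ z : X, g z ≠ ⊥)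
    (hglsc : LowerSemicontinuous g)
    (hgconv : ∀ z w : X, ∀ lam : ℝ, 0 < lam → lam < 1 →
      g (lam • z + (1 - lam) • w) ≤ (lam : EReal) * g z + ((1 - lam : ℝ) : EReal) * g w)
    (hgC : ∀ z ∈ C, g z ≠ ⊤)
    (xstar : X) (hxstarC : xstar ∈ C)
    (hxstarmin : ∀ y ∈ C, (f xstar : EReal) + g xstar ≤ (f y : EReal) + g y)
    (x xbar : ℕ → X) (γ : ℕ → ℝ)
    (hx0 : x 0 ∈ C)
    (hxbarC : ∀ k, xbar k ∈ C)
    (hxbarmin : ∀ k, ∀ y ∈ C,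
      (f' (x k) (xbar k) : EReal) + g (xbar k) ≤ (f' (x k) y : EReal) + g y)
    (hγ : ∀ k, γ k ∈ Set.Icc (0 : ℝ) 1)
    (hupdate : ∀ k, x (k + 1) = x k + γ k • (xbar k - x k))
    (hlinemin : ∀ k, ∀ γ' ∈ Set.Icc (0 : ℝ) 1,
      (f (x k + γ k • (xbar k - x k)) : EReal) + g (x k + γ k • (xbar k - x k)) ≤
        (f (x k + γ' • (xbar k - x k)) : EReal) + g (x k + γ' • (xbar k - x k))) :
    (∀ k, (f (x (k + 1)) : EReal) + g (x (k + 1)) ≤ (f (x k) : EReal) + g (x k)) ∧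
      Tendsto (fun k => (f (x k) : EReal) + g (x k)) atTop
        (𝓝 ((f xstar : EReal) + g xstar)) :=
  stmt_15_general C hCbd hCcv f f' hfconv hfderiv hfUC g hgnebot hgconv hgC xstar hxstarC hxstarmin
    x xbar γ hx0 hxbarC hxbarmin hγ hupdate hlinemin
end
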